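/- arXiv:2310.17474 — 2 statements merged into one kernel-verified Lean document; each statement's English description precedes it below -/
import Mathlib

section
/- Let X be a finite connected polygonal complex, ∗ a vertex of X, T a spanning tree of G(X), and ⟨S|R⟩ the presentation of the fundamental group π₁(X,∗) associated with retracting T. If X is ρ-cocycle stable for a rate function ρ, then ⟨S|R⟩ is ρ'-homomorphism stable with ρ'(ε) = |E⃗(X)|·ρ(ε), where |E⃗(X)| is the number of directed edges of X. -/
open scoped Classical

noncomputable section

namespace StabilityPaper

/-! ## Graphs à la Bass–Serre -/

structure BSGraph (V E : Type) where
  ι : E → V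
  τ : E → V
  bar : E → E
  bar_invol : ∀ e, bar (bar e) = e
  τ_bar : ∀ e, τ (bar e) = ι e
  bar_ne : ∀ e, bar e ≠ e

namespace BSGraph

variable {V E : Type}

/-- A path is a list of directed edges, consecutive ones being composable. -/
def IsPath (G : BSGraph V E) (p : List E) : Prop :=
  p.Chain' fun e f => G.τ e = G.ι f

def pathStart (G : BSGraph V E) (p : List E) : Option V := p.head?.map G.ι

def pathEnd (G : BSGraph V E) (p : List E) : Option V := p.getLast?.map G.τ

def IsClosedPath (G : BSGraph V E) (p : List E) : Prop :=
  p ≠ [] ∧ G.IsPath p ∧ G.pathStart p = G.pathEnd p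

def NonBacktracking (G : BSGraph V E) (p : List E) : Prop :=
  p.Chain' fun e f => f ≠ G.bar e

/-- The reverse orientation of a path. -/
def inv (G : BSGraph V E) (p : List E) : List E := (p.map G.bar).reverse

/-- Cyclically reduced: all cyclic shifts are non-backtracking. -/
def CyclicallyReduced (G : BSGraph V E) (p : List E) : Prop :=
  ∀ k, G.NonBacktracking (p.rotate k)

def Connected (G : BSGraph V E) : Prop :=
  ∀ x y : V, Relation.ReflTransGen (fun a b => ∃ e, G.ι e = a ∧ G.τ e = b) x y

/-- All shifts and reversals of a path: out of these one obtains the unoriented polygons. -/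
def orbitFinset [DecidableEq E] (G : BSGraph V E) (p : List E) : Finset (List E) :=
  ((Finset.range p.length).image fun k => p.rotate k) ∪
    ((Finset.range p.length).image fun k => (G.inv p).rotate k)


variable (G : BSGraph V E)

lemma length_inv (l : List E) : (G.inv l).length = l.length := by
  simp [BSGraph.inv]

lemma inv_inv (l : List E) : G.inv (G.inv l) = l := by
  unfold BSGraph.inv
  rw [List.map_reverse, List.reverse_reverse, List.map_map]
  simp [Function.comp_def, G.bar_invol]

lemma inv_rotate (l : List E) (k : ℕ) :
    G.inv (l.rotate k) = (G.inv l).rotate (l.length - k % l.length) := by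
  unfold BSGraph.inv
  rw [List.map_rotate, List.reverse_rotate]
  simp

lemma rotate_inv (l : List E) (k : ℕ) :
    (G.inv l).rotate k = G.inv (l.rotate (l.length - k % l.length)) := by
  unfold BSGraph.inv
  rw [List.map_rotate, List.rotate_reverse]
  simp

lemma nonback_inv {q : List E} (h : G.NonBacktracking q) : G.NonBacktracking (G.inv q) := by
  unfold BSGraph.NonBacktracking BSGraph.inv at *
  simp only [List.Chain'] at *
  rw [List.isChain_reverse, List.isChain_map]
  refine h.imp ?_
  intro a b hab
  show G.bar a ≠ G.bar (G.bar b)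
  rw [G.bar_invol]
  exact Ne.symm hab

lemma cyclRed_inv {w : List E} (h : G.CyclicallyReduced w) :
    G.CyclicallyReduced (G.inv w) := by
  intro k
  rw [G.rotate_inv]
  exact G.nonback_inv (h _)

variable [DecidableEq E]

lemma rotate_mem_orbitFinset {p : List E} (hp : p ≠ []) (j : ℕ) :
    p.rotate j ∈ G.orbitFinset p := by
  apply Finset.mem_union_left
  refine Finset.mem_image.2 ⟨j % p.length, Finset.mem_range.2 (Nat.mod_lt _ (List.length_pos_iff.2 hp)), ?_⟩
  rw [List.rotate_mod]

lemma inv_rotate_mem_orbitFinset {p : List E} (hp : p ≠ []) (j : ℕ) :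
    (G.inv p).rotate j ∈ G.orbitFinset p := by
  apply Finset.mem_union_right
  refine Finset.mem_image.2 ⟨j % p.length, Finset.mem_range.2 (Nat.mod_lt _ (List.length_pos_iff.2 hp)), ?_⟩
  conv_rhs => rw [← List.rotate_mod, G.length_inv]

lemma mem_orbitFinset {p q : List E} (hq : q ∈ G.orbitFinset p) :
    ∃ j, q = p.rotate j ∨ q = (G.inv p).rotate j := by
  rcases Finset.mem_union.1 hq with h | h <;>
    · obtain ⟨j, _, rfl⟩ := Finset.mem_image.1 h
      exact ⟨j, by tauto⟩

lemma orbit_rotate {p q : List E} (hp : p ≠ []) (hq : q ∈ G.orbitFinset p) (k : ℕ) :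
    q.rotate k ∈ G.orbitFinset p := by
  obtain ⟨j, rfl | rfl⟩ := G.mem_orbitFinset hq <;>
    rw [List.rotate_rotate]
  · exact G.rotate_mem_orbitFinset hp _
  · exact G.inv_rotate_mem_orbitFinset hp _

lemma orbit_inv {p q : List E} (hp : p ≠ []) (hq : q ∈ G.orbitFinset p) :
    G.inv q ∈ G.orbitFinset p := by
  obtain ⟨j, rfl | rfl⟩ := G.mem_orbitFinset hq
  · rw [G.inv_rotate]
    exact G.inv_rotate_mem_orbitFinset hp _
  · rw [G.inv_rotate, G.inv_inv, G.length_inv]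
    exact G.rotate_mem_orbitFinset hp _

lemma orbit_cyclRed {p q : List E} (hp : G.CyclicallyReduced p) (hq : q ∈ G.orbitFinset p) :
    G.CyclicallyReduced q := by
  obtain ⟨j, rfl | rfl⟩ := G.mem_orbitFinset hq <;> intro k <;> rw [List.rotate_rotate]
  · exact hp _
  · exact G.cyclRed_inv hp _

lemma orbit_length {p q : List E} (hq : q ∈ G.orbitFinset p) : q.length = p.length := by
  obtain ⟨j, rfl | rfl⟩ := G.mem_orbitFinset hq <;> simp [G.length_inv]


end BSGraph

/-! ## Polygonal complexes -/

structure PolyComplex (V E : Type) [Fintype V] [Fintype E] [DecidableEq V] [DecidableEq E]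
    extends BSGraph V E where
  P : Finset (List E)
  P_closed : ∀ p ∈ P, toBSGraph.IsClosedPath p
  P_cyclRed : ∀ p ∈ P, toBSGraph.CyclicallyReduced p
  P_rotate : ∀ p ∈ P, ∀ k, p.rotate k ∈ P
  P_inv : ∀ p ∈ P, toBSGraph.inv p ∈ P

variable {V E : Type} [Fintype V] [Fintype E] [DecidableEq V] [DecidableEq E]

/-- Average of a real valued function over a finset (uniform expectation). -/
def eavg {β : Type*} (s : Finset β) (f : β → ℝ) : ℝ := (∑ x ∈ s, f x) / s.card

/-- The probability that a uniformly random point is moved by the permutation `σ`;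
this is the normalized Hamming distance from `σ` to the identity. -/
def moveProb {n : ℕ} (σ : Equiv.Perm (Fin n)) : ℝ :=
  ((Finset.univ.filter fun i : Fin n => σ i ≠ i).card : ℝ) / n

/-- The normalized Hamming distance with errors between `σ ∈ Sym(n)` and `τ ∈ Sym(N)`,
`n ≤ N`. -/
def dH {n N : ℕ} (h : n ≤ N) (σ : Equiv.Perm (Fin n)) (τ : Equiv.Perm (Fin N)) : ℝ :=
  1 - ((Finset.univ.filter fun i : Fin n =>
    ((σ i : ℕ) = ((τ (Fin.castLE h i) : Fin N) : ℕ))).card : ℝ) / N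

namespace PolyComplex

variable (X : PolyComplex V E)

/-- A `1`-cochain with `Sym(n)` coefficients: an antisymmetric assignment of permutations to
directed edges. -/
def IsCochain {n : ℕ} (α : E → Equiv.Perm (Fin n)) : Prop :=
  ∀ e, α (X.bar e) = (α e)⁻¹

end PolyComplex

/-- Evaluation of a `1`-cochain along a path. -/
def evalPath {n : ℕ} (α : E → Equiv.Perm (Fin n)) (p : List E) : Equiv.Perm (Fin n) :=
  (p.map α).prod

namespace PolyComplex

variable (X : PolyComplex V E)

/-- A `1`-cocycle: a `1`-cochain whose coboundary is trivial on every polygon. -/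
def IsCocycle {n : ℕ} (α : E → Equiv.Perm (Fin n)) : Prop :=
  X.IsCochain α ∧ ∀ p ∈ X.P, evalPath α p = 1

/-- The set of orientations (shifts and reversals) of a polygon, i.e. the unoriented polygon
determined by `p`. -/
def orientations (p : List E) : Finset (List E) :=
  X.P.filter fun q => ∃ k, q = p.rotate k ∨ q = (X.toBSGraph.inv p).rotate k

/-- The unoriented polygons of `X`. -/
def polygonOrbits : Finset (Finset (List E)) := X.P.image fun p => X.orientations p

/-- The unoriented edges of `X`. -/
def edgeOrbits : Finset (Finset E) := Finset.univ.image fun e => ({e, X.bar e} : Finset E)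

/-- The local defect `‖δα‖` of a `1`-cochain: the probability that a uniformly random point is
moved by `δα(π)`, for a uniformly random unoriented polygon `[π]` and a uniformly random
orientation `π` of it. -/
def localDefect {n : ℕ} (α : E → Equiv.Perm (Fin n)) : ℝ :=
  eavg X.polygonOrbits fun O => eavg O fun p => moveProb (evalPath α p)

/-- The distance between two `1`-cochains: expected normalized Hamming distance (with errors)
over a uniformly random unoriented edge. -/
def cochainDist {n N : ℕ} (h : n ≤ N) (α : E → Equiv.Perm (Fin n))
    (φ : E → Equiv.Perm (Fin N)) : ℝ :=
  eavg X.edgeOrbits fun O => eavg O fun e => dH h (α e) (φ e)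

/-- The global defect of a `1`-cochain: its distance to the nearest `1`-cocycle (with possibly
larger permutation coefficients). -/
def DefCocyc {n : ℕ} (α : E → Equiv.Perm (Fin n)) : ℝ :=
  sInf { d : ℝ | ∃ (N : ℕ) (h : n ≤ N) (φ : E → Equiv.Perm (Fin N)),
    X.IsCocycle φ ∧ d = X.cochainDist h α φ }

/-- `ρ`-cocycle stability of the polygonal complex `X`. -/
def CocycleStable (ρ : ℝ → ℝ) : Prop :=
  ∀ (n : ℕ), 1 ≤ n → ∀ α : E → Equiv.Perm (Fin n), X.IsCochain α →
    X.DefCocyc α ≤ ρ (X.localDefect α)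

end PolyComplex

/-- A rate function: nondecreasing on `[0,∞)`, nonnegative there, tending to `0` at `0`. -/
def IsRateFunction (ρ : ℝ → ℝ) : Prop :=
  MonotoneOn ρ (Set.Ici 0) ∧ (∀ x, 0 ≤ x → 0 ≤ ρ x) ∧
    Filter.Tendsto ρ (nhdsWithin 0 (Set.Ici 0)) (nhds 0)

/-! ## Coverings -/

/-- A combinatorial map between graphs. -/
structure GraphHom {V₁ E₁ V₂ E₂ : Type} (G : BSGraph V₁ E₁) (H : BSGraph V₂ E₂) where
  fV : V₁ → V₂
  fE : E₁ → E₂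
  map_ι : ∀ e, H.ι (fE e) = fV (G.ι e)
  map_τ : ∀ e, H.τ (fE e) = fV (G.τ e)
  map_bar : ∀ e, fE (G.bar e) = H.bar (fE e)

/-- A covering: local bijectivity of stars. -/
def IsCovering {V₁ E₁ V₂ E₂ : Type} {G : BSGraph V₁ E₁} {H : BSGraph V₂ E₂}
    (f : GraphHom G H) : Prop :=
  ∀ y : V₁, Set.BijOn f.fE {e | G.τ e = y} {e' | H.τ e' = f.fV y}

/-- The lift of the path `p` at the vertex `v` is closed. -/
def liftClosedAt {V₁ E₁ V₂ E₂ : Type} {G : BSGraph V₁ E₁} {H : BSGraph V₂ E₂}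
    (f : GraphHom G H) (p : List E₂) (v : V₁) : Prop :=
  ∃ q : List E₁, G.IsPath q ∧ q.map f.fE = p ∧
    G.pathStart q = some v ∧ G.pathEnd q = some v

/-- A finite `H`-labeled graph. -/
structure FinLabeledGraph {V₂ E₂ : Type} (H : BSGraph V₂ E₂) where
  V : Type
  E : Type
  fintypeV : Fintype V
  fintypeE : Fintype E
  G : BSGraph V E
  lab : GraphHom G H

namespace FinLabeledGraph

variable {V₂ E₂ : Type} {H : BSGraph V₂ E₂}

/-- An embedding of labeled graphs. -/
def Embeds (A B : FinLabeledGraph H) : Prop :=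
  ∃ g : GraphHom A.G B.G, Function.Injective g.fV ∧ Function.Injective g.fE ∧
    (∀ v, B.lab.fV (g.fV v) = A.lab.fV v) ∧ (∀ e, B.lab.fE (g.fE e) = A.lab.fE e)

/-- An isomorphism of labeled graphs. -/
def LabIso (A B : FinLabeledGraph H) : Prop :=
  ∃ g : GraphHom A.G B.G, Function.Bijective g.fV ∧ Function.Bijective g.fE ∧
    (∀ v, B.lab.fV (g.fV v) = A.lab.fV v) ∧ (∀ e, B.lab.fE (g.fE e) = A.lab.fE e)

/-- The number of unoriented edges of a finite labeled graph. -/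
def unorientedEdgeCount (A : FinLabeledGraph H) : ℕ :=
  letI := A.fintypeE
  (Finset.univ.image fun e : A.E => ({e, A.G.bar e} : Finset A.E)).card

/-- The largest number of unoriented edges of a common labeled subgraph. -/
def maxCommonEdges (B C : FinLabeledGraph H) : ℕ :=
  sSup { m : ℕ | ∃ A : FinLabeledGraph H, A.Embeds B ∧ A.Embeds C ∧
    m = A.unorientedEdgeCount }

/-- Normalized edit distance between finite labeled graphs. -/
def editDist (B C : FinLabeledGraph H) : ℝ :=
  1 - (maxCommonEdges B C : ℝ) / (max B.unorientedEdgeCount C.unorientedEdgeCount : ℕ)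

end FinLabeledGraph

namespace PolyComplex

variable (X : PolyComplex V E)

/-- A genuine covering of the polygonal complex `X`: a covering of the underlying graph all of
whose lifts of polygons are closed. -/
def GenuineCovering (Z : FinLabeledGraph X.toBSGraph) : Prop :=
  IsCovering Z.lab ∧ ∀ p ∈ X.P, ∀ v : Z.V,
    X.toBSGraph.pathStart p = some (Z.lab.fV v) → liftClosedAt Z.lab p v

/-- The local defect of a covering: the probability that a uniformly random lift of a uniformly
random polygon is open. -/
def defCover (Y : FinLabeledGraph X.toBSGraph) : ℝ :=
  letI := Y.fintypeV
  eavg X.polygonOrbits fun O => eavg O fun p =>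
    eavg (Finset.univ.filter fun v : Y.V => X.toBSGraph.pathStart p = some (Y.lab.fV v))
      fun v => if liftClosedAt Y.lab p v then 0 else 1

/-- The global defect of a covering: its edit distance to the nearest genuine covering of `X`. -/
def DefCover (Y : FinLabeledGraph X.toBSGraph) : ℝ :=
  sInf { d : ℝ | ∃ Z : FinLabeledGraph X.toBSGraph, X.GenuineCovering Z ∧
    d = Y.editDist Z }

/-- `ρ`-covering stability of the polygonal complex `X`. -/
def CoveringStable (ρ : ℝ → ℝ) : Prop :=
  ∀ Y : FinLabeledGraph X.toBSGraph, IsCovering Y.lab →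
    X.DefCover Y ≤ ρ (X.defCover Y)

end PolyComplex

end StabilityPaper

namespace StabilityPaper

variable {V E : Type} [Fintype V] [Fintype E] [DecidableEq V] [DecidableEq E]

/-- The data of the presentation of the fundamental group `π₁(X, base)` obtained by retracting
a spanning tree `T` of the underlying graph of `X`: the tree is a bar-closed, connected edge
set with `|V| - 1` unoriented edges; the generating set `S` consists of one chosen orientation
of each unoriented edge outside the tree; the relations are indexed by the unoriented polygons
of `X`, via a chosen representative orientation `rep O` of each one, read as a word in the
generators. -/
structure TreePresentation (X : PolyComplex V E) where
  base : V
  T : Finset E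
  T_bar : ∀ e ∈ T, X.bar e ∈ T
  T_conn : ∀ x y : V,
    Relation.ReflTransGen (fun a b => ∃ e ∈ T, X.ι e = a ∧ X.τ e = b) x y
  T_card : T.card = 2 * (Fintype.card V - 1)
  S : Finset E
  S_not_tree : ∀ e ∈ S, e ∉ T
  S_orient : ∀ e, e ∉ T → (e ∈ S ↔ X.bar e ∉ S)
  rep : Finset (List E) → List E
  rep_mem : ∀ O ∈ X.polygonOrbits, rep O ∈ O

namespace TreePresentation

variable {X : PolyComplex V E} (P : TreePresentation X)

/-- The letter of the free group `F(S)` read off a directed edge: a generator for a chosen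
orientation outside the tree, its inverse for the reverse orientation, and the empty word for
tree edges. -/
def edgeWord (e : E) : FreeGroup ↥P.S :=
  if h : e ∈ P.S then FreeGroup.of (⟨e, h⟩ : ↥P.S)
  else if h' : X.bar e ∈ P.S then (FreeGroup.of (⟨X.bar e, h'⟩ : ↥P.S))⁻¹
  else 1

/-- The word in `F(S)` read off a path of `X`. -/
def pathWord (p : List E) : FreeGroup ↥P.S := (p.map P.edgeWord).prod

/-- The local defect of `f : S → Sym(n)` with respect to the presentation obtained by
retracting the spanning tree: one relation for each unoriented polygon. -/
def defHom {n : ℕ} (f : ↥P.S → Equiv.Perm (Fin n)) : ℝ :=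
  eavg X.polygonOrbits fun O => moveProb (FreeGroup.lift f (P.pathWord (P.rep O)))

/-- The global defect of `f : S → Sym(n)`: its distance to the nearest map `S → Sym(N)`,
`N ≥ n`, killing all the relations. -/
def DefHom {n : ℕ} (f : ↥P.S → Equiv.Perm (Fin n)) : ℝ :=
  sInf { d : ℝ | ∃ (N : ℕ) (h : n ≤ N) (φ : ↥P.S → Equiv.Perm (Fin N)),
    (∀ O ∈ X.polygonOrbits, FreeGroup.lift φ (P.pathWord (P.rep O)) = 1) ∧
    d = eavg (Finset.univ : Finset ↥P.S) fun s => dH h (f s) (φ s) }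

/-- `ρ`-homomorphism stability of the presentation of `π₁(X, base)` obtained by retracting the
spanning tree. -/
def HomStable (ρ : ℝ → ℝ) : Prop :=
  ∀ (n : ℕ), 1 ≤ n → ∀ f : ↥P.S → Equiv.Perm (Fin n), P.DefHom f ≤ ρ (P.defHom f)

end TreePresentation

end StabilityPaper

namespace StabilityPaper

/-! ### Auxiliary lemmas for the proof -/

section AuxPerm

open Finset

lemma moveProb_nonneg' {n : ℕ} (σ : Equiv.Perm (Fin n)) : 0 ≤ moveProb σ :=
  div_nonneg (Nat.cast_nonneg _) (Nat.cast_nonneg _)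

lemma moveProb_one' {n : ℕ} : moveProb (1 : Equiv.Perm (Fin n)) = 0 := by
  simp [moveProb]

lemma moveProb_inv' {n : ℕ} (σ : Equiv.Perm (Fin n)) : moveProb σ⁻¹ = moveProb σ := by
  have hset : (Finset.univ.filter fun i : Fin n => σ⁻¹ i ≠ i)
      = Finset.univ.filter fun i : Fin n => σ i ≠ i := by
    ext i
    simp only [Finset.mem_filter, Finset.mem_univ, true_and, ne_eq]
    constructor
    · intro h h2
      apply h
      conv_lhs => rw [← h2]
      exact σ.symm_apply_apply i
    · intro h h2
      apply h
      conv_lhs => rw [← h2]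
      exact σ.apply_symm_apply i
  unfold moveProb
  rw [hset]

lemma moveProb_conj' {n : ℕ} (σ c : Equiv.Perm (Fin n)) :
    moveProb (c * σ * c⁻¹) = moveProb σ := by
  unfold moveProb
  congr 2
  apply Finset.card_bij (fun i _ => c⁻¹ i)
  · intro a ha
    simp only [Finset.mem_filter, Finset.mem_univ, true_and, ne_eq] at ha ⊢
    intro h
    apply ha
    have : c (σ (c⁻¹ a)) = c (c⁻¹ a) := by rw [h]
    simpa [Equiv.Perm.mul_apply] using this
  · intro a _ b _ hab
    exact c⁻¹.injective hab
  · intro b hb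
    refine ⟨c b, ?_, by simp⟩
    simp only [Finset.mem_filter, Finset.mem_univ, true_and, ne_eq] at hb ⊢
    intro h
    apply hb
    simpa [Equiv.Perm.mul_apply] using h

lemma moveProb_mul_comm' {n : ℕ} (a b : Equiv.Perm (Fin n)) :
    moveProb (a * b) = moveProb (b * a) := by
  have : b * a = a⁻¹ * (a * b) * a⁻¹⁻¹ := by group
  rw [this, moveProb_conj']

lemma moveProb_mul_le' {n : ℕ} (σ τ : Equiv.Perm (Fin n)) :
    moveProb (σ * τ) ≤ moveProb σ + moveProb τ := by
  unfold moveProb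
  rw [← add_div]
  have hsub : (Finset.univ.filter fun i : Fin n => (σ * τ) i ≠ i) ⊆
      (Finset.univ.filter fun i : Fin n => σ i ≠ i) ∪
        (Finset.univ.filter fun i : Fin n => τ i ≠ i) := by
    intro i hi
    simp only [Finset.mem_filter, Finset.mem_univ, true_and, ne_eq, Finset.mem_union] at hi ⊢
    by_contra hc
    push_neg at hc
    apply hi
    rw [Equiv.Perm.mul_apply, hc.2, hc.1]
  have hcard : ((Finset.univ.filter fun i : Fin n => (σ * τ) i ≠ i).card : ℝ) ≤
      ((Finset.univ.filter fun i : Fin n => σ i ≠ i).card : ℝ) +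
        ((Finset.univ.filter fun i : Fin n => τ i ≠ i).card : ℝ) := by
    have := (Finset.card_le_card hsub).trans (Finset.card_union_le _ _)
    exact_mod_cast this
  rcases Nat.eq_zero_or_pos n with hn | hn
  · subst hn; simp
  · have hN : (0 : ℝ) < n := by exact_mod_cast hn
    exact (div_le_div_iff_of_pos_right hN).2 hcard

lemma dH_eq' {n N : ℕ} (h : n ≤ N) (σ : Equiv.Perm (Fin n)) (τ : Equiv.Perm (Fin N)) :
    dH h σ τ = 1 - ((Finset.univ.filter fun i : Fin n =>
      τ (Fin.castLE h i) = Fin.castLE h (σ i)).card : ℝ) / N := by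
  have hset : (Finset.univ.filter fun i : Fin n =>
      ((σ i : ℕ) = ((τ (Fin.castLE h i) : Fin N) : ℕ)))
      = Finset.univ.filter fun i : Fin n => τ (Fin.castLE h i) = Fin.castLE h (σ i) := by
    ext i
    simp only [Finset.mem_filter, Finset.mem_univ, true_and]
    rw [Fin.ext_iff, Fin.coe_castLE]
    exact eq_comm
  unfold dH
  rw [hset]

lemma dH_nonneg' {n N : ℕ} (h : n ≤ N) (σ : Equiv.Perm (Fin n)) (τ : Equiv.Perm (Fin N)) :
    0 ≤ dH h σ τ := by
  unfold dH
  have hle : ((Finset.univ.filter fun i : Fin n =>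
      ((σ i : ℕ) = ((τ (Fin.castLE h i) : Fin N) : ℕ))).card : ℝ) ≤ (N : ℝ) := by
    have : (Finset.univ.filter fun i : Fin n =>
        ((σ i : ℕ) = ((τ (Fin.castLE h i) : Fin N) : ℕ))).card ≤ N :=
      le_trans (le_trans (Finset.card_filter_le _ _) (le_of_eq (Finset.card_univ.trans (Fintype.card_fin n)))) h
    exact_mod_cast this
  have := div_le_one_of_le₀ hle (Nat.cast_nonneg _)
  linarith

lemma dH_inv_inv' {n N : ℕ} (h : n ≤ N) (σ : Equiv.Perm (Fin n)) (τ : Equiv.Perm (Fin N)) :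
    dH h σ⁻¹ τ⁻¹ = dH h σ τ := by
  rw [dH_eq', dH_eq']
  congr 3
  apply Finset.card_bij (fun i _ => σ⁻¹ i)
  · intro i hi
    simp only [Finset.mem_filter, Finset.mem_univ, true_and] at hi ⊢
    rw [show σ (σ⁻¹ i) = i from σ.apply_symm_apply i, ← hi]
    exact τ.apply_symm_apply _
  · intro a _ b _ hab
    exact σ⁻¹.injective hab
  · intro j hj
    simp only [Finset.mem_filter, Finset.mem_univ, true_and] at hj ⊢
    refine ⟨σ j, ?_, by simp⟩
    rw [show σ⁻¹ (σ j) = j from σ.symm_apply_apply j, ← hj]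
    exact τ.symm_apply_apply _

lemma dH_sandwich {n N : ℕ} (h : n ≤ N) (hN : 0 < N) (σ : Equiv.Perm (Fin n))
    (a τ b : Equiv.Perm (Fin N)) :
    dH h σ (a * τ * b) ≤ dH h σ τ + moveProb a + moveProb b := by
  rw [dH_eq', dH_eq']
  set G1 := Finset.univ.filter fun i : Fin n => τ (Fin.castLE h i) = Fin.castLE h (σ i) with hG1
  set G2 := Finset.univ.filter fun i : Fin n =>
    (a * τ * b) (Fin.castLE h i) = Fin.castLE h (σ i) with hG2
  set A := Finset.univ.filter fun i : Fin n =>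
    a (τ (Fin.castLE h i)) ≠ τ (Fin.castLE h i) with hA
  set B := Finset.univ.filter fun i : Fin n => b (Fin.castLE h i) ≠ Fin.castLE h i with hB
  have hsub : G1 ⊆ G2 ∪ A ∪ B := by
    intro i hi
    simp only [hG1, hG2, hA, hB, Finset.mem_filter, Finset.mem_univ, true_and, ne_eq,
      Finset.mem_union] at hi ⊢
    by_cases hAi : a (τ (Fin.castLE h i)) ≠ τ (Fin.castLE h i)
    · exact Or.inl (Or.inr hAi)
    by_cases hBi : b (Fin.castLE h i) ≠ Fin.castLE h i
    · exact Or.inr hBi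
    push_neg at hAi hBi
    refine Or.inl (Or.inl ?_)
    rw [Equiv.Perm.mul_apply, Equiv.Perm.mul_apply, hBi, hAi, hi]
  have hAcard : A.card ≤ (Finset.univ.filter fun j : Fin N => a j ≠ j).card := by
    apply Finset.card_le_card_of_injOn (fun i => τ (Fin.castLE h i))
    · intro i hi
      simp only [hA, Finset.mem_coe, Finset.mem_filter, Finset.mem_univ, true_and, ne_eq] at hi ⊢
      exact hi
    · intro i _ j _ hij
      exact Fin.castLE_injective h (τ.injective hij)
  have hBcard : B.card ≤ (Finset.univ.filter fun j : Fin N => b j ≠ j).card := by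
    apply Finset.card_le_card_of_injOn (fun i => Fin.castLE h i)
    · intro i hi
      simp only [hB, Finset.mem_coe, Finset.mem_filter, Finset.mem_univ, true_and, ne_eq] at hi ⊢
      exact hi
    · intro i _ j _ hij
      exact Fin.castLE_injective h hij
  have hcard : (G1.card : ℝ) ≤ G2.card +
      ((Finset.univ.filter fun j : Fin N => a j ≠ j).card : ℝ) +
      ((Finset.univ.filter fun j : Fin N => b j ≠ j).card : ℝ) := by
    have h1 : G1.card ≤ G2.card + A.card + B.card :=
      le_trans (Finset.card_le_card hsub)
        (le_trans (Finset.card_union_le _ _)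
          (by have := Finset.card_union_le G2 A; omega))
    have := le_trans h1 (by omega :
      G2.card + A.card + B.card ≤ G2.card + (Finset.univ.filter fun j : Fin N => a j ≠ j).card
        + (Finset.univ.filter fun j : Fin N => b j ≠ j).card)
    exact_mod_cast this
  have hNR : (0 : ℝ) < N := by exact_mod_cast hN
  have h2 : (G1.card : ℝ) / N ≤ (G2.card : ℝ) / N
      + ((Finset.univ.filter fun j : Fin N => a j ≠ j).card : ℝ) / N
      + ((Finset.univ.filter fun j : Fin N => b j ≠ j).card : ℝ) / N := by
    rw [← add_div, ← add_div]
    exact (div_le_div_iff_of_pos_right hNR).2 hcard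
  unfold moveProb
  linarith

lemma moveProb_le_dH_one {n N : ℕ} (h : n ≤ N) (hN : 0 < N) (π : Equiv.Perm (Fin N)) :
    moveProb π ≤ dH h (1 : Equiv.Perm (Fin n)) π := by
  rw [dH_eq']
  have hagree : (Finset.univ.filter fun i : Fin n =>
      π (Fin.castLE h i) = Fin.castLE h ((1 : Equiv.Perm (Fin n)) i)).card ≤
      (Finset.univ.filter fun j : Fin N => π j = j).card := by
    apply Finset.card_le_card_of_injOn (fun i => Fin.castLE h i)
    · intro i hi
      simp only [Finset.mem_coe, Finset.mem_filter, Finset.mem_univ, true_and, Equiv.Perm.one_apply] at hi ⊢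
      exact (Finset.mem_filter.1 hi).2
    · intro i _ j _ hij
      exact Fin.castLE_injective h hij
  have hsplit : (Finset.univ.filter fun j : Fin N => π j = j).card +
      (Finset.univ.filter fun j : Fin N => ¬ π j = j).card = N := by
    rw [Finset.card_filter_add_card_filter_not]
    simp
  have hNR : (0 : ℝ) < N := by exact_mod_cast hN
  have key : ((Finset.univ.filter fun j : Fin N => ¬ π j = j).card : ℝ) +
      ((Finset.univ.filter fun i : Fin n =>
        π (Fin.castLE h i) = Fin.castLE h ((1 : Equiv.Perm (Fin n)) i)).card : ℝ) ≤ N := by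
    have : (Finset.univ.filter fun j : Fin N => ¬ π j = j).card +
        (Finset.univ.filter fun i : Fin n =>
          π (Fin.castLE h i) = Fin.castLE h ((1 : Equiv.Perm (Fin n)) i)).card ≤ N := by
      omega
    exact_mod_cast this
  have hdiv := div_le_one_of_le₀ key (le_of_lt hNR)
  rw [add_div] at hdiv
  unfold moveProb
  simp only [ne_eq]
  linarith

end AuxPerm

section AuxEavg

lemma eavg_nonneg' {β : Type*} {s : Finset β} {f : β → ℝ} (hf : ∀ x ∈ s, 0 ≤ f x) :
    0 ≤ eavg s f :=
  div_nonneg (Finset.sum_nonneg hf) (Nat.cast_nonneg _)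

lemma eavg_const' {β : Type*} {s : Finset β} (hs : s.Nonempty) (c : ℝ) :
    eavg s (fun _ => c) = c := by
  unfold eavg
  rw [Finset.sum_const, nsmul_eq_mul]
  have : (s.card : ℝ) ≠ 0 := by
    exact_mod_cast Finset.card_ne_zero_of_mem hs.choose_spec
  field_simp

lemma eavg_congr' {β : Type*} {s : Finset β} {f g : β → ℝ} (h : ∀ x ∈ s, f x = g x) :
    eavg s f = eavg s g := by
  unfold eavg
  rw [Finset.sum_congr rfl h]

lemma eavg_mono' {β : Type*} {s : Finset β} {f g : β → ℝ} (h : ∀ x ∈ s, f x ≤ g x) :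
    eavg s f ≤ eavg s g := by
  unfold eavg
  rcases Nat.eq_zero_or_pos s.card with hc | hc
  · rw [hc]; simp
  · have : (0 : ℝ) < s.card := by exact_mod_cast hc
    exact (div_le_div_iff_of_pos_right this).2 (Finset.sum_le_sum h)

lemma eavg_add_const' {β : Type*} {s : Finset β} (hs : s.Nonempty) (f : β → ℝ) (c : ℝ) :
    eavg s (fun x => f x + c) = eavg s f + c := by
  unfold eavg
  rw [Finset.sum_add_distrib, Finset.sum_const, nsmul_eq_mul, add_div]
  have : (s.card : ℝ) ≠ 0 := by
    exact_mod_cast Finset.card_ne_zero_of_mem hs.choose_spec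
  field_simp

lemma eavg_le_sum' {β : Type*} {s : Finset β} {f : β → ℝ} (hf : ∀ x ∈ s, 0 ≤ f x) :
    eavg s f ≤ ∑ x ∈ s, f x := by
  unfold eavg
  rcases s.eq_empty_or_nonempty with rfl | hs
  · simp
  · apply div_le_self (Finset.sum_nonneg hf)
    have : 1 ≤ s.card := Finset.card_pos.2 hs
    exact_mod_cast this

/-- Sum of a nonneg function over a nodup list whose members lie in `s` is at most the
sum over `s`. -/
lemma list_sum_le_finset_sum {β : Type*} [DecidableEq β] :
    ∀ (L : List β) (s : Finset β) (F : β → ℝ), L.Nodup → (∀ x ∈ L, x ∈ s) →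
      (∀ x ∈ s, 0 ≤ F x) → (L.map F).sum ≤ ∑ x ∈ s, F x := by
  intro L
  induction L with
  | nil =>
    intro s F _ _ hF
    simpa using Finset.sum_nonneg hF
  | cons a L ih =>
    intro s F hnd hmem hF
    have haL : a ∉ L := (List.nodup_cons.1 hnd).1
    have has : a ∈ s := hmem a List.mem_cons_self
    have hsub : ∀ x ∈ L, x ∈ s.erase a := by
      intro x hx
      exact Finset.mem_erase.2 ⟨fun hxa => haL (hxa ▸ hx), hmem x (List.mem_cons_of_mem a hx)⟩
    have hrec := ih (s.erase a) F (List.nodup_cons.1 hnd).2 hsub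
      (fun x hx => hF x (Finset.mem_of_mem_erase hx))
    have : ∑ x ∈ s, F x = F a + ∑ x ∈ s.erase a, F x := by
      rw [← Finset.sum_erase_add s F has]
      ring
    rw [List.map_cons, List.sum_cons, this]
    linarith

lemma moveProb_list_prod' {n : ℕ} :
    ∀ L : List (Equiv.Perm (Fin n)), moveProb L.prod ≤ (L.map moveProb).sum := by
  intro L
  induction L with
  | nil => simp [moveProb_one']
  | cons a L ih =>
    rw [List.prod_cons, List.map_cons, List.sum_cons]
    exact le_trans (moveProb_mul_le' a L.prod) (by linarith)

end AuxEavg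

section AuxEvalPath

variable {V E : Type} [Fintype V] [Fintype E] [DecidableEq V] [DecidableEq E]

lemma evalPath_nil {n : ℕ} (α : E → Equiv.Perm (Fin n)) : evalPath α [] = 1 := rfl

lemma evalPath_cons {n : ℕ} (α : E → Equiv.Perm (Fin n)) (e : E) (p : List E) :
    evalPath α (e :: p) = α e * evalPath α p := by
  simp [evalPath]

lemma evalPath_append {n : ℕ} (α : E → Equiv.Perm (Fin n)) (p q : List E) :
    evalPath α (p ++ q) = evalPath α p * evalPath α q := by
  simp [evalPath]

lemma BSGraph.iota_bar (G : BSGraph V E) (e : E) : G.ι (G.bar e) = G.τ e := by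
  conv_rhs => rw [← G.bar_invol e]
  rw [G.τ_bar]

lemma evalPath_inv' {n : ℕ} (X : PolyComplex V E) (α : E → Equiv.Perm (Fin n))
    (hα : X.IsCochain α) : ∀ p : List E, evalPath α (X.toBSGraph.inv p) = (evalPath α p)⁻¹ := by
  intro p
  induction p with
  | nil => simp [evalPath, BSGraph.inv]
  | cons e p ih =>
    have hinv : X.toBSGraph.inv (e :: p) = X.toBSGraph.inv p ++ [X.bar e] := by
      simp [BSGraph.inv]
    rw [hinv, evalPath_append, ih, evalPath_cons, evalPath_nil, mul_one, hα e,
      evalPath_cons, mul_inv_rev]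

lemma moveProb_evalPath_rotate {n : ℕ} (α : E → Equiv.Perm (Fin n)) (l : List E) (k : ℕ) :
    moveProb (evalPath α (l.rotate k)) = moveProb (evalPath α l) := by
  rw [List.rotate_eq_drop_append_take_mod, evalPath_append]
  conv_rhs => rw [← List.take_append_drop (k % l.length) l]
  rw [evalPath_append, moveProb_mul_comm']

lemma moveProb_mem_orientations {n : ℕ} {X : PolyComplex V E} {α : E → Equiv.Perm (Fin n)}
    (hα : X.IsCochain α) {p q : List E} (hq : q ∈ X.orientations p) :
    moveProb (evalPath α q) = moveProb (evalPath α p) := by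
  obtain ⟨hqP, k, hk⟩ := Finset.mem_filter.1 hq
  rcases hk with rfl | rfl
  · exact moveProb_evalPath_rotate α p k
  · rw [moveProb_evalPath_rotate, evalPath_inv' X α hα, moveProb_inv']

end AuxEvalPath

section AuxSimpleGraph

open SimpleGraph

lemma connected_card_le {W : Type} [Fintype W] [DecidableEq W] {G : SimpleGraph W}
    [Fintype G.edgeSet] (hG : G.Connected) : Fintype.card W ≤ G.edgeFinset.card + 1 := by
  classical
  obtain ⟨b⟩ := hG.nonempty
  have hex : ∀ v : W, ∃ w : G.Walk v b, w.length = G.dist v b := fun v =>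
    (hG v b).exists_walk_length_eq_dist
  choose wk hwk using hex
  set fe : W → Sym2 W := fun v =>
    if hv : v = b then s(b, b) else ((wk v).firstDart (Walk.not_nil_of_ne hv)).edge with hfe
  have hmaps : ∀ v ∈ Finset.univ.erase b, fe v ∈ G.edgeFinset := by
    intro v hv
    have hvb : v ≠ b := (Finset.mem_erase.1 hv).1
    rw [hfe]
    simp only [dif_neg hvb]
    rw [mem_edgeFinset]
    exact ((wk v).firstDart (Walk.not_nil_of_ne hvb)).edge_mem
  have hinj : ∀ v₁ ∈ Finset.univ.erase b, ∀ v₂ ∈ Finset.univ.erase b,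
      fe v₁ = fe v₂ → v₁ = v₂ := by
    intro v₁ h₁ v₂ h₂ heq
    have hv₁ : v₁ ≠ b := (Finset.mem_erase.1 h₁).1
    have hv₂ : v₂ ≠ b := (Finset.mem_erase.1 h₂).1
    rw [hfe] at heq
    simp only [dif_neg hv₁, dif_neg hv₂] at heq
    rw [Walk.edge_firstDart, Walk.edge_firstDart, Sym2.eq_iff] at heq
    rcases heq with ⟨h, _⟩ | ⟨hA, hB⟩
    · exact h
    · exfalso
      -- v₁ = (wk v₂).getVert 1 and (wk v₁).getVert 1 = v₂
      have hd1 : G.dist v₂ b + 1 ≤ G.dist v₁ b := by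
        have hnn : ¬ (wk v₁).Nil := Walk.not_nil_of_ne hv₁
        have this := G.dist_le ((wk v₁).tail.copy hB rfl)
        rw [Walk.length_copy] at this
        have hlen := Walk.length_tail_add_one hnn
        rw [hwk v₁] at hlen
        omega
      have hd2 : G.dist v₁ b + 1 ≤ G.dist v₂ b := by
        have hnn : ¬ (wk v₂).Nil := Walk.not_nil_of_ne hv₂
        have this := G.dist_le ((wk v₂).tail.copy hA.symm rfl)
        rw [Walk.length_copy] at this
        have hlen := Walk.length_tail_add_one hnn
        rw [hwk v₂] at hlen
        omega
      omega
  have hcard := Finset.card_le_card_of_injOn fe hmaps hinj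
  have : (Finset.univ.erase b).card = Fintype.card W - 1 := by
    rw [Finset.card_erase_of_mem (Finset.mem_univ b), Finset.card_univ]
  have hpos : 1 ≤ Fintype.card W := Fintype.card_pos_iff.2 ⟨b⟩
  omega

lemma connected_delete_of_reachable {W : Type} {G : SimpleGraph W} {v w : W}
    (hG : G.Connected)
    (hr : (G \ SimpleGraph.fromEdgeSet {s(v, w)}).Reachable v w) :
    (G \ SimpleGraph.fromEdgeSet {s(v, w)}).Connected := by
  set H := G \ SimpleGraph.fromEdgeSet {s(v, w)} with hH
  have hadj : ∀ {a c : W}, G.Adj a c → H.Reachable a c := by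
    intro a c hac
    by_cases he : s(a, c) = s(v, w)
    · rw [Sym2.eq_iff] at he
      rcases he with ⟨rfl, rfl⟩ | ⟨rfl, rfl⟩
      · exact hr
      · exact hr.symm
    · refine SimpleGraph.Adj.reachable ?_
      rw [hH, sdiff_adj, fromEdgeSet_adj]
      exact ⟨hac, by simp [he]⟩
  have main : ∀ {a c : W}, G.Walk a c → H.Reachable a c := by
    intro a c p
    induction p with
    | nil => exact Reachable.refl _
    | cons h q ih => exact (hadj h).trans ih
  rw [SimpleGraph.connected_iff]
  exact ⟨fun a c => main ((hG a c).some), hG.nonempty⟩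

lemma isTree_of_connected_of_card {W : Type} [Fintype W] [DecidableEq W] {G : SimpleGraph W}
    [Fintype G.edgeSet] (hG : G.Connected)
    (hcard : G.edgeFinset.card + 1 ≤ Fintype.card W) : G.IsTree := by
  classical
  refine ⟨hG, ?_⟩
  intro u p hp
  have hlen : 3 ≤ p.length := hp.three_le_length
  have hne : p.edges ≠ [] := by
    intro h
    have := p.length_edges
    rw [h] at this
    simp at this
    omega
  obtain ⟨z, hz⟩ := List.exists_mem_of_ne_nil _ hne
  induction z using Sym2.ind with
  | _ x y =>
    have hreach : G.Adj x y ∧ (G \ SimpleGraph.fromEdgeSet {s(x, y)}).Reachable x y :=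
      adj_and_reachable_delete_edges_iff_exists_cycle.2 ⟨u, p, hp, hz⟩
    have hconn' := connected_delete_of_reachable hG hreach.2
    have hxy : x ≠ y := hreach.1.ne
    have hedge : (G \ SimpleGraph.fromEdgeSet {s(x, y)}).edgeFinset =
        G.edgeFinset.erase s(x, y) := by
      ext z
      simp only [mem_edgeFinset, Finset.mem_erase, edgeSet_sdiff, edgeSet_fromEdgeSet,
        Set.mem_diff, Set.mem_setOf_eq, Set.mem_singleton_iff]
      constructor
      · rintro ⟨hzG, hznot⟩
        refine ⟨fun hzz => hznot ⟨hzz, ?_⟩, hzG⟩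
        rw [hzz]
        simpa using hxy
      · rintro ⟨hzz, hzG⟩
        exact ⟨hzG, fun hcon => hzz hcon.1⟩
    have hle := connected_card_le hconn'
    rw [hedge] at hle
    have hmem : s(x, y) ∈ G.edgeFinset := by
      rw [mem_edgeFinset, mem_edgeSet]
      exact hreach.1
    rw [Finset.card_erase_of_mem hmem] at hle
    have hpos : 1 ≤ G.edgeFinset.card := Finset.card_pos.2 ⟨_, hmem⟩
    omega

end AuxSimpleGraph

section AuxOrbit

variable {V E : Type} [Fintype V] [Fintype E] [DecidableEq V] [DecidableEq E]

/-- The unoriented edge (orbit) of a directed edge. -/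
def edgeOrbit (X : PolyComplex V E) (e : E) : Finset E := {e, X.bar e}

lemma mem_edgeOrbit_iff {X : PolyComplex V E} {x e : E} :
    x ∈ edgeOrbit X e ↔ x = e ∨ x = X.bar e := by
  simp [edgeOrbit]

lemma self_mem_edgeOrbit (X : PolyComplex V E) (e : E) : e ∈ edgeOrbit X e :=
  mem_edgeOrbit_iff.2 (Or.inl rfl)

lemma edgeOrbit_bar (X : PolyComplex V E) (e : E) :
    edgeOrbit X (X.bar e) = edgeOrbit X e := by
  unfold edgeOrbit
  rw [X.bar_invol, Finset.pair_comm]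

lemma edgeOrbit_eq_of_mem {X : PolyComplex V E} {x e : E} (h : x ∈ edgeOrbit X e) :
    edgeOrbit X x = edgeOrbit X e := by
  rcases mem_edgeOrbit_iff.1 h with rfl | rfl
  · rfl
  · exact edgeOrbit_bar X e

lemma card_edgeOrbit (X : PolyComplex V E) (e : E) : (edgeOrbit X e).card = 2 := by
  unfold edgeOrbit
  rw [Finset.card_insert_of_notMem (by simp [Ne.symm (X.bar_ne e)]), Finset.card_singleton]

lemma two_mul_card_image_orbit (X : PolyComplex V E) (s : Finset E)
    (hbar : ∀ e ∈ s, X.bar e ∈ s) :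
    2 * (s.image (edgeOrbit X)).card = s.card := by
  have hdisj : ∀ O₁ ∈ s.image (edgeOrbit X), ∀ O₂ ∈ s.image (edgeOrbit X),
      O₁ ≠ O₂ → Disjoint (id O₁) (id O₂) := by
    intro O₁ h₁ O₂ h₂ hne
    obtain ⟨e₁, _, rfl⟩ := Finset.mem_image.1 h₁
    obtain ⟨e₂, _, rfl⟩ := Finset.mem_image.1 h₂
    rw [Finset.disjoint_left]
    intro x hx₁ hx₂
    exact hne ((edgeOrbit_eq_of_mem hx₁).symm.trans (edgeOrbit_eq_of_mem hx₂))
  have hcover : s = (s.image (edgeOrbit X)).biUnion id := by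
    ext x
    constructor
    · intro hx
      exact Finset.mem_biUnion.2 ⟨edgeOrbit X x, Finset.mem_image_of_mem _ hx,
        self_mem_edgeOrbit X x⟩
    · intro hx
      obtain ⟨O, hO, hxO⟩ := Finset.mem_biUnion.1 hx
      obtain ⟨e, he, rfl⟩ := Finset.mem_image.1 hO
      rcases mem_edgeOrbit_iff.1 hxO with rfl | rfl
      · exact he
      · exact hbar e he
  have hbu := Finset.card_biUnion hdisj
  rw [← hcover] at hbu
  have hall : ∀ O ∈ s.image (edgeOrbit X), (id O).card = 2 := by
    intro O hO
    obtain ⟨e, _, rfl⟩ := Finset.mem_image.1 hO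
    exact card_edgeOrbit X e
  rw [hbu, Finset.sum_congr rfl hall, Finset.sum_const, smul_eq_mul, mul_comm]

lemma card_E_eq_two_mul_orbits (X : PolyComplex V E) :
    Fintype.card E = 2 * X.edgeOrbits.card := by
  have := two_mul_card_image_orbit X Finset.univ (fun e _ => Finset.mem_univ _)
  rw [Finset.card_univ] at this
  rw [← this]
  rfl

end AuxOrbit

section AuxPres

variable {V E : Type} [Fintype V] [Fintype E] [DecidableEq V] [DecidableEq E]
variable {X : PolyComplex V E} (P : TreePresentation X)

lemma bar_not_mem_T {e : E} (h : e ∉ P.T) : X.bar e ∉ P.T := by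
  intro hbar
  apply h
  rw [← X.bar_invol e]
  exact P.T_bar _ hbar

lemma mem_T_of_not_S {e : E} (h : e ∉ P.S) (h' : X.bar e ∉ P.S) : e ∈ P.T := by
  by_contra hT
  exact h ((P.S_orient e hT).2 h')

lemma S_trichotomy (e : E) :
    e ∈ P.T ∨ (e ∈ P.S ∧ X.bar e ∉ P.S ∧ e ∉ P.T) ∨
      (e ∉ P.S ∧ X.bar e ∈ P.S ∧ e ∉ P.T) := by
  by_cases hT : e ∈ P.T
  · exact Or.inl hT
  by_cases hS : e ∈ P.S
  · exact Or.inr (Or.inl ⟨hS, (P.S_orient e hT).1 hS, hT⟩)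
  · exact Or.inr (Or.inr ⟨hS, not_not.1 fun hb => hS ((P.S_orient e hT).2 hb), hT⟩)

lemma edgeWord_of_mem_S {e : E} (h : e ∈ P.S) :
    P.edgeWord e = FreeGroup.of (⟨e, h⟩ : ↥P.S) := by
  unfold TreePresentation.edgeWord
  rw [dif_pos h]

lemma edgeWord_of_bar_mem_S {e : E} (h : e ∉ P.S) (h' : X.bar e ∈ P.S) :
    P.edgeWord e = (FreeGroup.of (⟨X.bar e, h'⟩ : ↥P.S))⁻¹ := by
  unfold TreePresentation.edgeWord
  rw [dif_neg h, dif_pos h']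

lemma edgeWord_of_not_S {e : E} (h : e ∉ P.S) (h' : X.bar e ∉ P.S) :
    P.edgeWord e = 1 := by
  unfold TreePresentation.edgeWord
  rw [dif_neg h, dif_neg h']

lemma edgeWord_of_mem_T {e : E} (h : e ∈ P.T) : P.edgeWord e = 1 :=
  edgeWord_of_not_S P (fun hS => P.S_not_tree e hS h)
    (fun hS => P.S_not_tree _ hS (P.T_bar e h))

lemma edgeWord_bar (e : E) : P.edgeWord (X.bar e) = (P.edgeWord e)⁻¹ := by
  rcases S_trichotomy P e with hT | ⟨hS, hbS, _⟩ | ⟨hS, hbS, _⟩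
  · rw [edgeWord_of_mem_T P (P.T_bar e hT), edgeWord_of_mem_T P hT, inv_one]
  · have h'' : X.bar (X.bar e) ∈ P.S := by rw [X.bar_invol]; exact hS
    rw [edgeWord_of_mem_S P hS, edgeWord_of_bar_mem_S P hbS h'']
    have : (⟨X.bar (X.bar e), h''⟩ : ↥P.S) = ⟨e, hS⟩ := Subtype.ext (X.bar_invol e)
    rw [this]
  · rw [edgeWord_of_bar_mem_S P hS hbS, inv_inv, edgeWord_of_mem_S P hbS]

/-- The 1-cochain associated with a map on the generators. -/
def alph {n : ℕ} (f : ↥P.S → Equiv.Perm (Fin n)) : E → Equiv.Perm (Fin n) :=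
  fun e => FreeGroup.lift f (P.edgeWord e)

lemma alph_cochain {n : ℕ} (f : ↥P.S → Equiv.Perm (Fin n)) : X.IsCochain (alph P f) := by
  intro e
  unfold alph
  rw [edgeWord_bar, map_inv]

lemma alph_S {n : ℕ} (f : ↥P.S → Equiv.Perm (Fin n)) (s : ↥P.S) : alph P f s.1 = f s := by
  unfold alph
  rw [edgeWord_of_mem_S P s.2, FreeGroup.lift_apply_of]

lemma alph_T {n : ℕ} (f : ↥P.S → Equiv.Perm (Fin n)) {e : E} (h : e ∈ P.T) :
    alph P f e = 1 := by
  unfold alph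
  rw [edgeWord_of_mem_T P h, map_one]

lemma evalPath_alph {n : ℕ} (f : ↥P.S → Equiv.Perm (Fin n)) (p : List E) :
    evalPath (alph P f) p = FreeGroup.lift f (P.pathWord p) := by
  unfold evalPath TreePresentation.pathWord alph
  rw [map_list_prod, List.map_map]
  simp [Function.comp_def]

lemma localDefect_alph {n : ℕ} (f : ↥P.S → Equiv.Perm (Fin n)) :
    X.localDefect (alph P f) = P.defHom f := by
  unfold PolyComplex.localDefect TreePresentation.defHom
  apply eavg_congr'
  intro O hO
  have hO' := hO
  obtain ⟨p0, hp0, rfl⟩ := Finset.mem_image.1 hO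
  have hself : p0 ∈ X.orientations p0 :=
    Finset.mem_filter.2 ⟨hp0, 0, Or.inl (by rw [List.rotate_zero])⟩
  have hrep := P.rep_mem _ hO'
  have h1 : eavg (X.orientations p0) (fun p => moveProb (evalPath (alph P f) p))
      = eavg (X.orientations p0) (fun _ => moveProb (evalPath (alph P f) p0)) :=
    eavg_congr' (fun q hq => moveProb_mem_orientations (alph_cochain P f) hq)
  rw [h1, eavg_const' ⟨p0, hself⟩, ← evalPath_alph]
  exact (moveProb_mem_orientations (alph_cochain P f) hrep).symm

end AuxPres

section AuxTree

open SimpleGraph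

variable {V E : Type} [Fintype V] [Fintype E] [DecidableEq V] [DecidableEq E]
variable {X : PolyComplex V E} (P : TreePresentation X)

/-- The simple graph underlying the spanning tree. -/
def treeGraph : SimpleGraph V where
  Adj u v := u ≠ v ∧ ∃ e ∈ P.T, X.ι e = u ∧ X.τ e = v
  symm := ⟨by
    rintro u v ⟨huv, e, heT, rfl, rfl⟩
    exact ⟨huv.symm, X.bar e, P.T_bar e heT, X.toBSGraph.iota_bar e, X.τ_bar e⟩⟩
  loopless := ⟨fun v h => h.1 rfl⟩

lemma treeGraph_connected : (treeGraph P).Connected := by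
  rw [SimpleGraph.connected_iff]
  refine ⟨?_, ⟨P.base⟩⟩
  intro x y
  have h := P.T_conn x y
  induction h with
  | refl => exact Reachable.refl _
  | tail _ hstep ih =>
    obtain ⟨e, heT, rfl, rfl⟩ := hstep
    rcases eq_or_ne (X.ι e) (X.τ e) with heq | hne
    · rw [← heq]; exact ih
    · exact ih.trans (SimpleGraph.Adj.reachable ⟨hne, e, heT, rfl, rfl⟩)

/-- The unoriented tree edges. -/
def treeOrbits : Finset (Finset E) := P.T.image (edgeOrbit X)

lemma card_treeOrbits : (treeOrbits P).card = Fintype.card V - 1 := by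
  have h := two_mul_card_image_orbit X P.T P.T_bar
  rw [P.T_card] at h
  unfold treeOrbits
  omega

lemma treeGraph_main :
    (treeGraph P).IsTree ∧ (∀ e ∈ P.T, X.ι e ≠ X.τ e) ∧
      (∀ e e', e ∈ P.T → e' ∈ P.T → s(X.ι e, X.τ e) = s(X.ι e', X.τ e') →
        e' ∈ edgeOrbit X e) := by
  classical
  -- the injection from simple graph edges to tree orbits
  have hsurj : ∀ z ∈ (treeGraph P).edgeFinset,
      ∃ e, e ∈ P.T ∧ s(X.ι e, X.τ e) = z ∧ X.ι e ≠ X.τ e := by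
    intro z hz
    rw [mem_edgeFinset] at hz
    induction z using Sym2.ind with
    | _ u v =>
      rw [mem_edgeSet] at hz
      obtain ⟨hne, e, heT, hι, hτ⟩ := hz
      exact ⟨e, heT, by rw [hι, hτ], by rw [hι, hτ]; exact hne⟩
  choose ch hchT hche hchne using hsurj
  set F : Sym2 V → Finset E := fun z =>
    if hz : z ∈ (treeGraph P).edgeFinset then edgeOrbit X (ch z hz) else ∅ with hF
  have hFmaps : ∀ z ∈ (treeGraph P).edgeFinset, F z ∈ treeOrbits P := by
    intro z hz
    rw [hF]
    simp only [dif_pos hz]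
    exact Finset.mem_image_of_mem _ (hchT z hz)
  have hendp : ∀ e e' : E, e' ∈ edgeOrbit X e → s(X.ι e', X.τ e') = s(X.ι e, X.τ e) := by
    intro e e' he'
    rcases mem_edgeOrbit_iff.1 he' with rfl | rfl
    · rfl
    · rw [X.toBSGraph.iota_bar, X.τ_bar, Sym2.eq_swap]
  have hFinj : ∀ z₁ ∈ (treeGraph P).edgeFinset, ∀ z₂ ∈ (treeGraph P).edgeFinset,
      F z₁ = F z₂ → z₁ = z₂ := by
    intro z₁ h₁ z₂ h₂ heq
    rw [hF] at heq
    simp only [dif_pos h₁, dif_pos h₂] at heq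
    have : ch z₂ h₂ ∈ edgeOrbit X (ch z₁ h₁) := heq ▸ self_mem_edgeOrbit X _
    have := hendp _ _ this
    rw [hche z₁ h₁, hche z₂ h₂] at this
    exact this.symm
  have hcard_le : (treeGraph P).edgeFinset.card ≤ (treeOrbits P).card :=
    Finset.card_le_card_of_injOn F hFmaps hFinj
  have hconn := treeGraph_connected P
  have hge := connected_card_le hconn
  have hVpos : 1 ≤ Fintype.card V := Fintype.card_pos_iff.2 ⟨P.base⟩
  have horb := card_treeOrbits P
  have hcard_eq : (treeGraph P).edgeFinset.card = Fintype.card V - 1 := by omega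
  have htree : (treeGraph P).IsTree := by
    apply isTree_of_connected_of_card hconn
    omega
  -- surjectivity of F onto treeOrbits
  have himage : (treeGraph P).edgeFinset.image F = treeOrbits P := by
    apply Finset.eq_of_subset_of_card_le
    · intro O hO
      obtain ⟨z, hz, rfl⟩ := Finset.mem_image.1 hO
      exact hFmaps z hz
    · rw [Finset.card_image_of_injOn hFinj]
      omega
  -- no loops
  have hnoloop : ∀ e ∈ P.T, X.ι e ≠ X.τ e := by
    intro e heT heq
    -- the orbit of e is in treeOrbits but not in the image of F, since all chosen
    -- edges are non-loops
    have hin : edgeOrbit X e ∈ treeOrbits P := Finset.mem_image_of_mem _ heT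
    rw [← himage] at hin
    obtain ⟨z, hz, hFz⟩ := Finset.mem_image.1 hin
    rw [hF] at hFz
    simp only [dif_pos hz] at hFz
    have : e ∈ edgeOrbit X (ch z hz) := hFz ▸ self_mem_edgeOrbit X e
    have h2 := hendp _ _ this
    have h3 := hchne z hz
    rw [heq] at h2
    apply h3
    have := Sym2.eq_iff.1 h2
    rcases this with ⟨ha, hb⟩ | ⟨ha, hb⟩
    · rw [← ha, ← hb]
    · rw [← ha, ← hb]
  -- no parallel edges
  refine ⟨htree, hnoloop, ?_⟩
  intro e e' heT h'T hpar
  have hne : X.ι e ≠ X.τ e := hnoloop e heT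
  have hne' : X.ι e' ≠ X.τ e' := hnoloop e' h'T
  -- both e and e' give rise to edges of the tree graph
  have hze : s(X.ι e, X.τ e) ∈ (treeGraph P).edgeFinset := by
    rw [mem_edgeFinset, mem_edgeSet]
    exact ⟨hne, e, heT, rfl, rfl⟩
  -- consider the orbit of e and of e' as elements of treeOrbits = image F
  have hin : edgeOrbit X e ∈ treeOrbits P := Finset.mem_image_of_mem _ heT
  have hin' : edgeOrbit X e' ∈ treeOrbits P := Finset.mem_image_of_mem _ h'T
  rw [← himage] at hin hin'
  obtain ⟨z, hz, hFz⟩ := Finset.mem_image.1 hin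
  obtain ⟨z', hz', hFz'⟩ := Finset.mem_image.1 hin'
  rw [hF] at hFz hFz'
  simp only [dif_pos hz] at hFz
  simp only [dif_pos hz'] at hFz'
  -- z = s(ι e, τ e) and z' = s(ι e', τ e')
  have hze2 : z = s(X.ι e, X.τ e) := by
    have : e ∈ edgeOrbit X (ch z hz) := hFz ▸ self_mem_edgeOrbit X e
    rw [← hche z hz]
    exact (hendp _ _ this).symm
  have hze2' : z' = s(X.ι e', X.τ e') := by
    have : e' ∈ edgeOrbit X (ch z' hz') := hFz' ▸ self_mem_edgeOrbit X e'
    rw [← hche z' hz']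
    exact (hendp _ _ this).symm
  have hzz : z = z' := by rw [hze2, hze2', hpar]
  subst hzz
  have horb_eq : edgeOrbit X e = edgeOrbit X e' := by rw [← hFz, ← hFz']
  rw [horb_eq]
  exact self_mem_edgeOrbit X e'

end AuxTree

section AuxHol

open SimpleGraph

variable {V E : Type} [Fintype V] [Fintype E] [DecidableEq V] [DecidableEq E]
variable {X : PolyComplex V E} (P : TreePresentation X)

/-- The tree edge chosen for an adjacency of the tree graph. -/
def chE {u v : V} (h : (treeGraph P).Adj u v) : E := h.2.choose

lemma chE_spec {u v : V} (h : (treeGraph P).Adj u v) :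
    chE P h ∈ P.T ∧ X.ι (chE P h) = u ∧ X.τ (chE P h) = v :=
  h.2.choose_spec

lemma chE_eq {u v : V} (h : (treeGraph P).Adj u v) {e : E}
    (heT : e ∈ P.T) (hι : X.ι e = u) (hτ : X.τ e = v) : e = chE P h := by
  obtain ⟨hT', hι', hτ'⟩ := chE_spec P h
  have hpar := (treeGraph_main P).2.2 (chE P h) e hT' heT
    (by rw [hι, hτ, hι', hτ'])
  rcases mem_edgeOrbit_iff.1 hpar with h1 | h1
  · exact h1
  · exfalso
    have : X.ι e = X.τ (chE P h) := by rw [h1, X.toBSGraph.iota_bar]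
    rw [hι, hτ'] at this
    exact h.1 this

lemma chE_symm {u v : V} (h : (treeGraph P).Adj u v) :
    chE P h.symm = X.bar (chE P h) := by
  obtain ⟨hT, hι, hτ⟩ := chE_spec P h
  refine (chE_eq P h.symm (P.T_bar _ hT) ?_ ?_).symm
  · rw [X.toBSGraph.iota_bar, hτ]
  · rw [X.τ_bar, hι]

variable {N : ℕ}

/-- Holonomy of a cochain along a walk in the tree. -/
def hol (φ : E → Equiv.Perm (Fin N)) {u v : V} (w : (treeGraph P).Walk u v) :
    Equiv.Perm (Fin N) :=
  (w.darts.map fun d => φ (chE P d.adj)).prod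

lemma hol_nil (φ : E → Equiv.Perm (Fin N)) (u : V) :
    hol P φ (Walk.nil : (treeGraph P).Walk u u) = 1 := rfl

lemma hol_append (φ : E → Equiv.Perm (Fin N)) {u v w : V}
    (p : (treeGraph P).Walk u v) (q : (treeGraph P).Walk v w) :
    hol P φ (p.append q) = hol P φ p * hol P φ q := by
  unfold hol
  rw [Walk.darts_append, List.map_append, List.prod_append]

lemma hol_single (φ : E → Equiv.Perm (Fin N)) {u v : V} (h : (treeGraph P).Adj u v) :
    hol P φ (Walk.cons h Walk.nil) = φ (chE P h) := by
  unfold hol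
  simp [Walk.darts_cons]

/-- The vertex potential: holonomy along the chosen path from the base vertex. -/
def pot (φ : E → Equiv.Perm (Fin N)) (v : V) : Equiv.Perm (Fin N) :=
  hol P φ ((treeGraph_main P).1.existsUnique_path P.base v).choose

lemma pot_path_spec (v : V) :
    (((treeGraph_main P).1.existsUnique_path P.base v).choose).IsPath :=
  (((treeGraph_main P).1.existsUnique_path P.base v).choose_spec).1

lemma pot_path_unique {v : V} (q : (treeGraph P).Walk P.base v) (hq : q.IsPath) :
    q = (((treeGraph_main P).1.existsUnique_path P.base v).choose) :=
  (((treeGraph_main P).1.existsUnique_path P.base v).choose_spec).2 q hq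

lemma pot_flat (φ : E → Equiv.Perm (Fin N)) (hφ : X.IsCochain φ) {e : E} (heT : e ∈ P.T) :
    pot P φ (X.τ e) = pot P φ (X.ι e) * φ e := by
  have hne : X.ι e ≠ X.τ e := (treeGraph_main P).2.1 e heT
  have ha : (treeGraph P).Adj (X.ι e) (X.τ e) := ⟨hne, e, heT, rfl, rfl⟩
  have hche : chE P ha = e := (chE_eq P ha heT rfl rfl).symm
  set p := (((treeGraph_main P).1.existsUnique_path P.base (X.τ e)).choose) with hp
  set q := (((treeGraph_main P).1.existsUnique_path P.base (X.ι e)).choose) with hq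
  have hppath : p.IsPath := pot_path_spec P _
  have hqpath : q.IsPath := pot_path_spec P _
  by_cases hu : X.ι e ∈ p.support
  · -- p = (p.takeUntil u).append (p.dropUntil u), and dropUntil is the single edge
    have htake := p.take_spec hu
    have htakePath : (p.takeUntil _ hu).IsPath := hppath.takeUntil hu
    have hdropPath : (p.dropUntil _ hu).IsPath := hppath.dropUntil hu
    have hdrop_single : p.dropUntil _ hu = Walk.cons ha Walk.nil := by
      have h1 : (Walk.cons ha (Walk.nil : (treeGraph P).Walk (X.τ e) (X.τ e))).IsPath := by
        rw [Walk.isPath_def]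
        simp [hne]
      have h2 := ((treeGraph_main P).1.existsUnique_path (X.ι e) (X.τ e)).choose_spec.2
      rw [h2 _ hdropPath, h2 _ h1]
    have hq_eq : q = p.takeUntil _ hu := hq.trans (pot_path_unique P _ htakePath).symm
    have : pot P φ (X.τ e) = hol P φ ((p.takeUntil _ hu).append (p.dropUntil _ hu)) := by
      unfold pot
      rw [← hp, htake]
    rw [this, hol_append, hdrop_single, hol_single, hche]
    unfold pot
    rw [← hq, hq_eq]
  · by_cases hv : X.τ e ∈ q.support
    · -- symmetric case
      have htake := q.take_spec hv
      have htakePath : (q.takeUntil _ hv).IsPath := hqpath.takeUntil hv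
      have hdropPath : (q.dropUntil _ hv).IsPath := hqpath.dropUntil hv
      have hdrop_single : q.dropUntil _ hv = Walk.cons ha.symm Walk.nil := by
        have h1 : (Walk.cons ha.symm (Walk.nil : (treeGraph P).Walk (X.ι e) (X.ι e))).IsPath := by
          rw [Walk.isPath_def]
          simp [Ne.symm hne]
        have h2 := ((treeGraph_main P).1.existsUnique_path (X.τ e) (X.ι e)).choose_spec.2
        rw [h2 _ hdropPath, h2 _ h1]
      have hp_eq : p = q.takeUntil _ hv := hp.trans (pot_path_unique P _ htakePath).symm
      have : pot P φ (X.ι e) = hol P φ ((q.takeUntil _ hv).append (q.dropUntil _ hv)) := by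
        unfold pot
        rw [← hq, htake]
      rw [this, hol_append, hdrop_single, hol_single, chE_symm P ha, hche, hφ e]
      unfold pot
      rw [← hp, hp_eq]
      group
    · -- impossible: q.append (single edge) is a path from base to τ e avoiding... 
      exfalso
      have hwpath : (q.append (Walk.cons ha Walk.nil)).IsPath := by
        rw [Walk.isPath_def, Walk.support_append]
        simp only [Walk.support_cons, Walk.support_nil, List.tail_cons]
        rw [List.nodup_append]
        refine ⟨hqpath.support_nodup, List.nodup_singleton _, ?_⟩
        intro a haq b hamem
        simp only [List.mem_singleton] at hamem
        subst hamem
        exact fun h => hv (h ▸ haq)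
      have := pot_path_unique P _ hwpath
      apply hu
      rw [hp, ← this]
      rw [Walk.mem_support_append_iff]
      left
      exact Walk.end_mem_support q

lemma hol_moveProb_le (φ : E → Equiv.Perm (Fin N)) (F : Finset E → ℝ)
    (hF0 : ∀ O ∈ treeOrbits P, 0 ≤ F O)
    (hFle : ∀ e ∈ P.T, moveProb (φ e) ≤ F (edgeOrbit X e))
    {u v : V} (w : (treeGraph P).Walk u v) (hw : w.IsPath) :
    moveProb (hol P φ w) ≤ ∑ O ∈ treeOrbits P, F O := by
  have h1 : moveProb (hol P φ w) ≤
      (w.darts.map fun d => moveProb (φ (chE P d.adj))).sum := by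
    unfold hol
    have := moveProb_list_prod' (w.darts.map fun d => φ (chE P d.adj))
    rw [List.map_map] at this
    simpa only [Function.comp_def] using this
  have h2 : (w.darts.map fun d => moveProb (φ (chE P d.adj))).sum ≤
      (w.darts.map fun d => F (edgeOrbit X (chE P d.adj))).sum := by
    apply List.sum_le_sum
    intro d _
    exact hFle _ (chE_spec P d.adj).1
  have hnodup : (w.darts.map fun d => edgeOrbit X (chE P d.adj)).Nodup := by
    have hedges := hw.edges_nodup
    have hsing : (w.edges.map fun z => ({z} : Finset (Sym2 V))).Nodup :=
      hedges.map Finset.singleton_injective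
    have hagree : w.edges.map (fun z => ({z} : Finset (Sym2 V)))
        = (w.darts.map fun d => edgeOrbit X (chE P d.adj)).map
            (fun O => O.image fun e => s(X.ι e, X.τ e)) := by
      unfold SimpleGraph.Walk.edges
      rw [List.map_map, List.map_map]
      apply List.map_congr_left
      intro d _
      obtain ⟨hT, hι, hτ⟩ := chE_spec P d.adj
      have hswap : s(X.τ (chE P d.adj), X.ι (chE P d.adj))
          = s(X.ι (chE P d.adj), X.τ (chE P d.adj)) := Sym2.eq_swap
      have himg : (edgeOrbit X (chE P d.adj)).image (fun e => s(X.ι e, X.τ e))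
          = {s(X.ι (chE P d.adj), X.τ (chE P d.adj))} := by
        unfold edgeOrbit
        rw [Finset.image_insert, Finset.image_singleton, X.toBSGraph.iota_bar, X.τ_bar,
          hswap]
        exact Finset.insert_eq_self.2 (Finset.mem_singleton_self _)
      show ({d.edge} : Finset (Sym2 V))
          = (edgeOrbit X (chE P d.adj)).image fun e => s(X.ι e, X.τ e)
      rw [himg, hι, hτ]
      rfl
    rw [hagree] at hsing
    exact hsing.of_map _
  have hmem : ∀ O ∈ (w.darts.map fun d => edgeOrbit X (chE P d.adj)), O ∈ treeOrbits P := by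
    intro O hO
    obtain ⟨d, _, rfl⟩ := List.mem_map.1 hO
    exact Finset.mem_image_of_mem _ (chE_spec P d.adj).1
  have h3 := list_sum_le_finset_sum
    (w.darts.map fun d => edgeOrbit X (chE P d.adj)) (treeOrbits P) F hnodup hmem hF0
  rw [List.map_map] at h3
  simp only [Function.comp_def] at h3
  exact le_trans h1 (le_trans h2 h3)

end AuxHol

section AuxKey

variable {V E : Type} [Fintype V] [Fintype E] [DecidableEq V] [DecidableEq E]
variable {X : PolyComplex V E} (P : TreePresentation X)

lemma edgeOrbits_eq (X : PolyComplex V E) :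
    X.edgeOrbits = Finset.univ.image (edgeOrbit X) := rfl

lemma telescope {n : ℕ} (β φ : E → Equiv.Perm (Fin n)) (g : V → Equiv.Perm (Fin n))
    (hβ : ∀ e, β e = g (X.ι e) * φ e * (g (X.τ e))⁻¹) :
    ∀ (p : List E), X.toBSGraph.IsPath p → ∀ u w, X.toBSGraph.pathStart p = some u →
      X.toBSGraph.pathEnd p = some w →
      evalPath β p = g u * evalPath φ p * (g w)⁻¹ := by
  intro p
  induction p with
  | nil =>
    intro _ u w hstart _
    simp [BSGraph.pathStart] at hstart
  | cons e rest ih =>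
    intro hpath u w hstart hend
    have hu : u = X.ι e := by
      simp only [BSGraph.pathStart, List.head?_cons, Option.map_some] at hstart
      exact (Option.some_inj.1 hstart).symm
    subst hu
    cases rest with
    | nil =>
      have hw : w = X.τ e := by
        simp only [BSGraph.pathEnd, List.getLast?_singleton, Option.map_some] at hend
        exact (Option.some_inj.1 hend).symm
      subst hw
      rw [evalPath_cons, evalPath_nil, mul_one, hβ, evalPath_cons, evalPath_nil, mul_one]
    | cons e' rest' =>
      have hchain := hpath
      simp only [BSGraph.IsPath, List.Chain', List.isChain_cons_cons] at hchain
      obtain ⟨hστ, hrest⟩ := hchain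
      have hstart' : X.toBSGraph.pathStart (e' :: rest') = some (X.ι e') := by
        simp [BSGraph.pathStart]
      have hend' : X.toBSGraph.pathEnd (e' :: rest') = some w := by
        rw [← hend]
        simp only [BSGraph.pathEnd, List.getLast?_cons_cons]
      have := ih hrest (X.ι e') w hstart' hend'
      rw [evalPath_cons, this, hβ, evalPath_cons (p := e' :: rest'), ← hστ]
      group

lemma lift_edgeWord {N : ℕ} (φ : E → Equiv.Perm (Fin N)) (hφ : X.IsCochain φ)
    (g : V → Equiv.Perm (Fin N)) (hflat : ∀ e ∈ P.T, g (X.τ e) = g (X.ι e) * φ e)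
    (ψ : ↥P.S → Equiv.Perm (Fin N))
    (hψ : ∀ s : ↥P.S, ψ s = g (X.ι s.1) * φ s.1 * (g (X.τ s.1))⁻¹) (e : E) :
    FreeGroup.lift ψ (P.edgeWord e) = g (X.ι e) * φ e * (g (X.τ e))⁻¹ := by
  rcases S_trichotomy P e with hT | ⟨hS, hbS, _⟩ | ⟨hS, hbS, _⟩
  · rw [edgeWord_of_mem_T P hT, map_one, hflat e hT]
    group
  · rw [edgeWord_of_mem_S P hS, FreeGroup.lift_apply_of, hψ]
  · rw [edgeWord_of_bar_mem_S P hS hbS, map_inv, FreeGroup.lift_apply_of, hψ]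
    simp only
    rw [X.toBSGraph.iota_bar, X.τ_bar, hφ e]
    group

lemma psi_relations {N : ℕ} (φ : E → Equiv.Perm (Fin N)) (hφc : X.IsCocycle φ)
    (g : V → Equiv.Perm (Fin N)) (hflat : ∀ e ∈ P.T, g (X.τ e) = g (X.ι e) * φ e)
    (ψ : ↥P.S → Equiv.Perm (Fin N))
    (hψ : ∀ s : ↥P.S, ψ s = g (X.ι s.1) * φ s.1 * (g (X.τ s.1))⁻¹) :
    ∀ O ∈ X.polygonOrbits, FreeGroup.lift ψ (P.pathWord (P.rep O)) = 1 := by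
  intro O hO
  have hrep := P.rep_mem O hO
  have hrepP : P.rep O ∈ X.P := by
    obtain ⟨p0, hp0, rfl⟩ := Finset.mem_image.1 hO
    exact (Finset.mem_filter.1 hrep).1
  obtain ⟨hne, hpath, hclosed⟩ := X.P_closed _ hrepP
  have hβ : ∀ e, alph P ψ e = g (X.ι e) * φ e * (g (X.τ e))⁻¹ := by
    intro e
    unfold alph
    exact lift_edgeWord P φ hφc.1 g hflat ψ hψ e
  have hstart : X.toBSGraph.pathStart (P.rep O) =
      some (X.ι ((P.rep O).head hne)) := by
    unfold BSGraph.pathStart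
    rw [List.head?_eq_head hne]
    rfl
  have hend : X.toBSGraph.pathEnd (P.rep O) =
      some (X.τ ((P.rep O).getLast hne)) := by
    unfold BSGraph.pathEnd
    rw [List.getLast?_eq_getLast hne]
    rfl
  have hsame : X.ι ((P.rep O).head hne) = X.τ ((P.rep O).getLast hne) := by
    have := hclosed
    rw [hstart, hend] at this
    exact Option.some_inj.1 this
  have htel := telescope (alph P ψ) φ g hβ (P.rep O) hpath _ _ hstart hend
  rw [← evalPath_alph, htel, hφc.2 _ hrepP, hsame]
  group

end AuxKey

section AuxFinal

variable {V E : Type} [Fintype V] [Fintype E] [DecidableEq V] [DecidableEq E]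
variable {X : PolyComplex V E} (P : TreePresentation X)

lemma key_bound {n N : ℕ} (hn : 1 ≤ n) (h : n ≤ N) (f : ↥P.S → Equiv.Perm (Fin n))
    (φ : E → Equiv.Perm (Fin N)) (hφ : X.IsCocycle φ) :
    P.DefHom f ≤ (Fintype.card E : ℝ) * X.cochainDist h (alph P f) φ := by
  have hN : 0 < N := lt_of_lt_of_le hn h
  have hDbar : ∀ e, dH h (alph P f (X.bar e)) (φ (X.bar e)) = dH h (alph P f e) (φ e) := by
    intro e
    rw [alph_cochain P f e, hφ.1 e, dH_inv_inv']
  have hForbit : ∀ e : E, eavg (edgeOrbit X e) (fun e' => dH h (alph P f e') (φ e'))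
      = dH h (alph P f e) (φ e) := by
    intro e
    unfold eavg
    rw [card_edgeOrbit]
    unfold edgeOrbit
    rw [Finset.sum_pair (Ne.symm (X.bar_ne e)), hDbar e]
    ring
  have hF0 : ∀ O : Finset E, 0 ≤ eavg O (fun e' => dH h (alph P f e') (φ e')) :=
    fun O => eavg_nonneg' (fun e _ => dH_nonneg' h _ _)
  -- the right-hand side equals twice the sum of F over all unoriented edges
  have hRHS : (Fintype.card E : ℝ) * X.cochainDist h (alph P f) φ
      = 2 * ∑ O ∈ X.edgeOrbits, eavg O (fun e' => dH h (alph P f e') (φ e')) := by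
    have hcardE := card_E_eq_two_mul_orbits X
    unfold PolyComplex.cochainDist
    rcases Finset.eq_empty_or_nonempty X.edgeOrbits with hemp | hne
    · rw [hemp] at hcardE ⊢
      simp only [Finset.card_empty, mul_zero] at hcardE
      rw [hcardE]
      simp [eavg]
    · unfold eavg
      rw [hcardE]
      have hnz : (X.edgeOrbits.card : ℝ) ≠ 0 := by
        exact_mod_cast Finset.card_ne_zero_of_mem hne.choose_spec
      push_cast
      field_simp
  -- the potential
  have hflat : ∀ e ∈ P.T, pot P φ (X.τ e) = pot P φ (X.ι e) * φ e :=
    fun e heT => pot_flat P φ hφ.1 heT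
  have hgle : ∀ v : V, moveProb (pot P φ v) ≤
      ∑ O ∈ treeOrbits P, eavg O (fun e' => dH h (alph P f e') (φ e')) := by
    intro v
    apply hol_moveProb_le P φ _ (fun O _ => hF0 O) _ _ (pot_path_spec P v)
    intro e heT
    rw [hForbit e, alph_T P f heT]
    exact moveProb_le_dH_one h hN (φ e)
  set B := ∑ O ∈ treeOrbits P, eavg O (fun e' => dH h (alph P f e') (φ e')) with hB
  set ψ : ↥P.S → Equiv.Perm (Fin N) :=
    fun s => pot P φ (X.ι s.1) * φ s.1 * (pot P φ (X.τ s.1))⁻¹ with hψdef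
  have hrel := psi_relations P φ hφ (pot P φ) hflat ψ (fun s => rfl)
  have hmem : eavg (Finset.univ : Finset ↥P.S) (fun s => dH h (f s) (ψ s)) ∈
      { d : ℝ | ∃ (N' : ℕ) (h' : n ≤ N') (φ' : ↥P.S → Equiv.Perm (Fin N')),
        (∀ O ∈ X.polygonOrbits, FreeGroup.lift φ' (P.pathWord (P.rep O)) = 1) ∧
        d = eavg (Finset.univ : Finset ↥P.S) fun s => dH h' (f s) (φ' s) } :=
    ⟨N, h, ψ, hrel, rfl⟩
  have hbdd : BddBelow { d : ℝ | ∃ (N' : ℕ) (h' : n ≤ N') (φ' : ↥P.S → Equiv.Perm (Fin N')),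
      (∀ O ∈ X.polygonOrbits, FreeGroup.lift φ' (P.pathWord (P.rep O)) = 1) ∧
      d = eavg (Finset.univ : Finset ↥P.S) fun s => dH h' (f s) (φ' s) } := by
    refine ⟨0, ?_⟩
    rintro d ⟨N', h', φ', _, rfl⟩
    exact eavg_nonneg' (fun s _ => dH_nonneg' h' _ _)
  have hDefHom_le : P.DefHom f ≤
      eavg (Finset.univ : Finset ↥P.S) (fun s => dH h (f s) (ψ s)) :=
    csInf_le hbdd hmem
  -- pointwise bound
  have hpoint : ∀ s : ↥P.S, dH h (f s) (ψ s) ≤ dH h (alph P f s.1) (φ s.1) + 2 * B := by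
    intro s
    have h1 : dH h (f s) (ψ s) = dH h (alph P f s.1)
        (pot P φ (X.ι s.1) * φ s.1 * (pot P φ (X.τ s.1))⁻¹) := by
      rw [alph_S P f s]
    rw [h1]
    have h2 := dH_sandwich h hN (alph P f s.1) (pot P φ (X.ι s.1)) (φ s.1)
      (pot P φ (X.τ s.1))⁻¹
    have h3 := hgle (X.ι s.1)
    have h4 := hgle (X.τ s.1)
    rw [moveProb_inv'] at h2
    linarith
  rcases Finset.eq_empty_or_nonempty (Finset.univ : Finset ↥P.S) with hemp | hne
  · rw [hemp] at hDefHom_le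
    simp only [eavg, Finset.sum_empty, Finset.card_empty, Nat.cast_zero, div_zero]
      at hDefHom_le
    rw [hRHS]
    have : 0 ≤ ∑ O ∈ X.edgeOrbits, eavg O (fun e' => dH h (alph P f e') (φ e')) :=
      Finset.sum_nonneg (fun O _ => hF0 O)
    linarith
  · have step1 : eavg (Finset.univ : Finset ↥P.S) (fun s => dH h (f s) (ψ s)) ≤
        eavg (Finset.univ : Finset ↥P.S)
          (fun s => dH h (alph P f s.1) (φ s.1) + 2 * B) :=
      eavg_mono' (fun s _ => hpoint s)
    have step1' : eavg (Finset.univ : Finset ↥P.S)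
          (fun s => dH h (alph P f s.1) (φ s.1) + 2 * B)
        = eavg (Finset.univ : Finset ↥P.S)
            (fun s => dH h (alph P f s.1) (φ s.1)) + 2 * B :=
      eavg_add_const' hne _ _
    have step2 : eavg (Finset.univ : Finset ↥P.S)
        (fun s => dH h (alph P f s.1) (φ s.1)) ≤
        ∑ s : ↥P.S, dH h (alph P f s.1) (φ s.1) :=
      eavg_le_sum' (fun s _ => dH_nonneg' h _ _)
    have step3 : ∑ s : ↥P.S, dH h (alph P f s.1) (φ s.1)
        = ∑ e ∈ P.S, dH h (alph P f e) (φ e) :=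
      Finset.sum_coe_sort P.S (fun e => dH h (alph P f e) (φ e))
    have hSinj : ∀ e ∈ P.S, ∀ e' ∈ P.S, edgeOrbit X e = edgeOrbit X e' → e = e' := by
      intro e he e' he' horb
      have : e' ∈ edgeOrbit X e := horb ▸ self_mem_edgeOrbit X e'
      rcases mem_edgeOrbit_iff.1 this with h1 | h1
      · exact h1.symm
      · exfalso
        have hbarS : X.bar e ∉ P.S := (P.S_orient e (P.S_not_tree e he)).1 he
        rw [h1] at he'
        exact hbarS he'
    have step4 : ∑ e ∈ P.S, dH h (alph P f e) (φ e)
        = ∑ O ∈ P.S.image (edgeOrbit X), eavg O (fun e' => dH h (alph P f e') (φ e')) := by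
      rw [Finset.sum_image hSinj]
      exact (Finset.sum_congr rfl (fun e _ => hForbit e)).symm
    have hdisj : Disjoint (P.S.image (edgeOrbit X)) (treeOrbits P) := by
      rw [Finset.disjoint_left]
      rintro O hOS hOT
      obtain ⟨s, hs, rfl⟩ := Finset.mem_image.1 hOS
      obtain ⟨t, ht, horb⟩ := Finset.mem_image.1 hOT
      have : s ∈ edgeOrbit X t := horb ▸ self_mem_edgeOrbit X s
      rcases mem_edgeOrbit_iff.1 this with h1 | h1
      · exact P.S_not_tree s hs (h1 ▸ ht)
      · exact P.S_not_tree s hs (h1 ▸ P.T_bar t ht)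
    have hsub : P.S.image (edgeOrbit X) ∪ treeOrbits P ⊆ X.edgeOrbits := by
      intro O hO
      rw [edgeOrbits_eq]
      rcases Finset.mem_union.1 hO with hO1 | hO1
      · obtain ⟨e, _, rfl⟩ := Finset.mem_image.1 hO1
        exact Finset.mem_image_of_mem _ (Finset.mem_univ e)
      · obtain ⟨e, _, rfl⟩ := Finset.mem_image.1 hO1
        exact Finset.mem_image_of_mem _ (Finset.mem_univ e)
    have hunion : ∑ O ∈ P.S.image (edgeOrbit X),
          eavg O (fun e' => dH h (alph P f e') (φ e'))
        + ∑ O ∈ treeOrbits P, eavg O (fun e' => dH h (alph P f e') (φ e'))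
        = ∑ O ∈ P.S.image (edgeOrbit X) ∪ treeOrbits P,
            eavg O (fun e' => dH h (alph P f e') (φ e')) :=
      (Finset.sum_union hdisj).symm
    have hfinal : ∑ O ∈ P.S.image (edgeOrbit X) ∪ treeOrbits P,
          eavg O (fun e' => dH h (alph P f e') (φ e'))
        ≤ ∑ O ∈ X.edgeOrbits, eavg O (fun e' => dH h (alph P f e') (φ e')) :=
      Finset.sum_le_sum_of_subset_of_nonneg hsub (fun O _ _ => hF0 O)
    have hSorb_nonneg : 0 ≤ ∑ O ∈ P.S.image (edgeOrbit X),
        eavg O (fun e' => dH h (alph P f e') (φ e')) :=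
      Finset.sum_nonneg (fun O _ => hF0 O)
    have hTorb_nonneg : 0 ≤ B := by
      rw [hB]
      exact Finset.sum_nonneg (fun O _ => hF0 O)
    have hBsum : B = ∑ O ∈ treeOrbits P, eavg O (fun e' => dH h (alph P f e') (φ e')) := hB
    rw [hRHS]
    linarith [hDefHom_le, step1, step1', step2, step3, step4, hunion, hfinal,
      hSorb_nonneg, hTorb_nonneg, hBsum]

end AuxFinal


/-- **Theorem 3(2).** Let `X` be a finite connected polygonal complex, `∗` a vertex, `T` a
spanning tree of `G(X)`, and `⟨S|R⟩` the presentation of `π₁(X,∗)` associated with retracting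
`T`. If `X` is `ρ`-cocycle stable for a rate function `ρ`, then `⟨S|R⟩` is
`ρ'`-homomorphism stable with `ρ'(ε) = |E⃗(X)| · ρ(ε)`. -/
theorem cocycleStable_imp_homStable
    {V E : Type} [Fintype V] [Fintype E] [DecidableEq V] [DecidableEq E]
    (X : PolyComplex V E) (hconn : X.toBSGraph.Connected)
    (P : TreePresentation X) (ρ : ℝ → ℝ) (hρ : IsRateFunction ρ)
    (hstab : X.CocycleStable ρ) :
    P.HomStable fun ε => (Fintype.card E : ℝ) * ρ ε := by
  intro n hn f
  show P.DefHom f ≤ (Fintype.card E : ℝ) * ρ (P.defHom f)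
  have hstab' := hstab n hn (alph P f) (alph_cochain P f)
  rw [localDefect_alph P f] at hstab'
  have hone : X.IsCocycle (fun _ : E => (1 : Equiv.Perm (Fin n))) := by
    constructor
    · intro e
      simp
    · intro p _
      unfold evalPath
      apply List.prod_eq_one
      intro x hx
      obtain ⟨a, -, rfl⟩ := List.mem_map.1 hx
      rfl
  rcases Nat.eq_zero_or_pos (Fintype.card E) with hE | hE
  · have hkey := key_bound P hn (le_refl n) f (fun _ => 1) hone
    rw [hE] at hkey
    simp only [Nat.cast_zero, zero_mul] at hkey
    rw [hE]
    simp only [Nat.cast_zero, zero_mul]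
    exact hkey
  · have hcE : (0 : ℝ) < (Fintype.card E : ℝ) := by exact_mod_cast hE
    have hdiv : P.DefHom f / (Fintype.card E : ℝ) ≤ X.DefCocyc (alph P f) := by
      unfold PolyComplex.DefCocyc
      apply le_csInf
      · exact ⟨X.cochainDist (le_refl n) (alph P f) (fun _ => 1), n, le_refl n,
          fun _ => 1, hone, rfl⟩
      · rintro b ⟨N, hNn, φ, hφ, rfl⟩
        rw [div_le_iff₀ hcE, mul_comm]
        exact key_bound P hn hNn f φ hφ
    rw [div_le_iff₀ hcE] at hdiv
    calc P.DefHom f ≤ X.DefCocyc (alph P f) * (Fintype.card E : ℝ) := hdiv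
      _ ≤ ρ (P.defHom f) * (Fintype.card E : ℝ) :=
        mul_le_mul_of_nonneg_right hstab' (le_of_lt hcE)
      _ = (Fintype.card E : ℝ) * ρ (P.defHom f) := mul_comm _ _


end StabilityPaper
end
end

section
/- Let V be a nonempty finite set and A : V × V → ℕ a symmetric matrix with all row sums equal to k ≥ 1, such that the associated multigraph X is connected. Then the classical Cheeger constant satisfies h(X) = (k/2)·h₀(X, 𝔽₂), and moreover h₀(X, 𝔽₂) ≥ h₀(X, Sym). -/
open scoped Pointwise

open scoped BigOperators

noncomputable section

/-- The normalized Hamming distance between two permutations of the same degree. -/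
def dh0 {n : ℕ} (σ τ : Equiv.Perm (Fin n)) : ℝ :=
  ((Finset.univ.filter fun i : Fin n => σ i ≠ τ i).card : ℝ) / n

/-- The normalized Hamming distance with errors between `σ ∈ Sym(n)` and `τ ∈ Sym(N)`,
`n ≤ N`. -/
def dH {n N : ℕ} (h : n ≤ N) (σ : Equiv.Perm (Fin n)) (τ : Equiv.Perm (Fin N)) : ℝ :=
  1 - ((Finset.univ.filter fun i : Fin n =>
    ((σ i : ℕ) = ((τ (Fin.castLE h i) : Fin N) : ℕ))).card : ℝ) / N

variable {V : Type*} [Fintype V] [DecidableEq V]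

/-- The local defect `‖δα‖` of a `0`-cochain `α : V → Sym(n)`. -/
def localDefect0 (A : V → V → ℕ) (k : ℕ) {n : ℕ} (α : V → Equiv.Perm (Fin n)) : ℝ :=
  (∑ x, ∑ y, (A x y : ℝ) * dh0 (α x) (α y)) / ((k : ℝ) * (Fintype.card V : ℝ))

/-- The distance of a `0`-cochain to the `0`-cocycles with permutation coefficients. -/
def distToConstants {n : ℕ} (α : V → Equiv.Perm (Fin n)) : ℝ :=
  sInf { d : ℝ | ∃ (N : ℕ) (h : n ≤ N) (σ : Equiv.Perm (Fin N)),
    d = (∑ y, dH h (α y) σ) / (Fintype.card V : ℝ) }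

/-- The 0th cocycle Cheeger constant with permutation coefficients. -/
def cheeger0Sym (A : V → V → ℕ) (k : ℕ) : ℝ :=
  sInf { c : ℝ | ∃ (n : ℕ) (_ : 2 ≤ n) (α : V → Equiv.Perm (Fin n)),
    localDefect0 A k α ≠ 0 ∧ c = localDefect0 A k α / distToConstants α }

/-- The 0th cocycle Cheeger constant with `𝔽₂ ≅ Sym(2)` coefficients: the infimum over
nonconstant `α : V → 𝔽₂` of `‖δα‖ / d(α, Z⁰)`, where `d(α, Z⁰)` is the fraction of vertices
in the smaller level set. -/
def cheeger0F2 (A : V → V → ℕ) (k : ℕ) : ℝ :=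
  sInf { c : ℝ | ∃ α : V → Bool, (∃ x y, α x ≠ α y) ∧
    c = ((∑ x, ∑ y, (A x y : ℝ) * (if α x ≠ α y then 1 else 0)) /
          ((k : ℝ) * (Fintype.card V : ℝ))) /
        ((min (Finset.univ.filter fun x => α x = true).card
              (Finset.univ.filter fun x => α x = false).card : ℝ) /
          (Fintype.card V : ℝ)) }

/-- The classical Cheeger constant of the multigraph: minimum of `e(S, Sᶜ)/min(|S|,|Sᶜ|)`
over nonempty proper vertex subsets `S`. -/
def cheegerClassical (A : V → V → ℕ) : ℝ :=
  sInf { c : ℝ | ∃ S : Finset V, S.Nonempty ∧ S ≠ Finset.univ ∧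
    c = (∑ x ∈ S, ∑ y ∈ Sᶜ, (A x y : ℝ)) / (min S.card Sᶜ.card : ℝ) }

section AuxLemmas

variable {V : Type*} [Fintype V] [DecidableEq V]

lemma compl_filter_true (α : V → Bool) :
    (Finset.univ.filter fun x => α x = true)ᶜ = Finset.univ.filter fun x => α x = false := by
  ext x
  simp [Finset.mem_compl, Finset.mem_filter]

lemma num2 (A : V → V → ℕ) (hsymm : ∀ x y, A x y = A y x) (α : V → Bool) :
    ∑ x, ∑ y, (A x y : ℝ) * (if α x ≠ α y then 1 else 0)
      = 2 * ∑ x ∈ (Finset.univ.filter fun x => α x = true),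
            ∑ y ∈ (Finset.univ.filter fun x => α x = true)ᶜ, (A x y : ℝ) := by
  classical
  set S := Finset.univ.filter (fun x => α x = true) with hS
  have h1 : ∀ x ∈ S, (∑ y, (A x y : ℝ) * (if α x ≠ α y then 1 else 0))
      = ∑ y ∈ Sᶜ, (A x y : ℝ) := by
    intro x hx
    have hxt : α x = true := by simpa [hS] using hx
    rw [hS, compl_filter_true, Finset.sum_filter]
    apply Finset.sum_congr rfl
    intro y _
    by_cases h : α y = false
    · simp [h, hxt]
    · simp only [Bool.not_eq_false] at h
      simp [h, hxt]
  have h2 : ∀ x ∈ Sᶜ, (∑ y, (A x y : ℝ) * (if α x ≠ α y then 1 else 0))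
      = ∑ y ∈ S, (A x y : ℝ) := by
    intro x hx
    have hxt : α x = false := by
      rw [hS, compl_filter_true] at hx
      simpa using hx
    rw [hS, Finset.sum_filter]
    apply Finset.sum_congr rfl
    intro y _
    by_cases h : α y = true
    · simp [h, hxt]
    · simp only [Bool.not_eq_true] at h
      simp [h, hxt]
  rw [← Finset.sum_add_sum_compl S (fun x => ∑ y, (A x y : ℝ) * (if α x ≠ α y then 1 else 0)),
    Finset.sum_congr rfl h1, Finset.sum_congr rfl h2]
  have h3 : ∑ x ∈ Sᶜ, ∑ y ∈ S, (A x y : ℝ) = ∑ x ∈ S, ∑ y ∈ Sᶜ, (A x y : ℝ) := by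
    rw [Finset.sum_comm]
    exact Finset.sum_congr rfl fun x _ => Finset.sum_congr rfl fun y _ => by
      rw [hsymm]
  rw [h3]; ring

lemma filter_card_min_pos (α : V → Bool)
    (hT : (Finset.univ.filter fun x => α x = true).Nonempty)
    (hF : (Finset.univ.filter fun x => α x = false).Nonempty) :
    (0 : ℝ) < (min (Finset.univ.filter fun x => α x = true).card
        (Finset.univ.filter fun x => α x = false).card : ℕ) := by
  have := Finset.card_pos.mpr hT
  have := Finset.card_pos.mpr hF
  have : 0 < min (Finset.univ.filter fun x => α x = true).card
      (Finset.univ.filter fun x => α x = false).card := by omega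
  exact_mod_cast this

lemma value_core (A : V → V → ℕ) (k : ℕ) (hk : 1 ≤ k) (hsymm : ∀ x y, A x y = A y x)
    [Nonempty V] (α : V → Bool)
    (hT : (Finset.univ.filter fun x => α x = true).Nonempty)
    (hF : (Finset.univ.filter fun x => α x = false).Nonempty) :
    (∑ x ∈ (Finset.univ.filter fun x => α x = true),
        ∑ y ∈ (Finset.univ.filter fun x => α x = true)ᶜ, (A x y : ℝ)) /
      (min (Finset.univ.filter fun x => α x = true).card
          (Finset.univ.filter fun x => α x = true)ᶜ.card : ℝ)
    = ((k : ℝ) / 2) *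
      (((∑ x, ∑ y, (A x y : ℝ) * (if α x ≠ α y then 1 else 0)) /
          ((k : ℝ) * (Fintype.card V : ℝ))) /
        ((min (Finset.univ.filter fun x => α x = true).card
              (Finset.univ.filter fun x => α x = false).card : ℝ) /
          (Fintype.card V : ℝ))) := by
  rw [num2 A hsymm α, compl_filter_true]
  have hm : (0 : ℝ) < (min (Finset.univ.filter fun x => α x = true).card
      (Finset.univ.filter fun x => α x = false).card : ℕ) := filter_card_min_pos α hT hF
  have hk' : (0 : ℝ) < (k : ℝ) := by exact_mod_cast hk
  have hV : (0 : ℝ) < (Fintype.card V : ℝ) := by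
    exact_mod_cast Fintype.card_pos
  push_cast at hm ⊢
  field_simp

end AuxLemmas
section Aux2

/-- Embedding of `Bool ≅ Sym(2)`. -/
def c2 : Bool → Equiv.Perm (Fin 2) := fun b => if b then Equiv.swap 0 1 else 1

lemma dh0_self {n : ℕ} (σ : Equiv.Perm (Fin n)) : dh0 σ σ = 0 := by
  simp [dh0]

lemma dh0_c2 (a b : Bool) : dh0 (c2 a) (c2 b) = if a ≠ b then 1 else 0 := by
  have h1 : (Finset.univ.filter fun i : Fin 2 =>
      (Equiv.swap 0 1 : Equiv.Perm (Fin 2)) i ≠ (1 : Equiv.Perm (Fin 2)) i).card = 2 := by decide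
  have h2 : (Finset.univ.filter fun i : Fin 2 =>
      (1 : Equiv.Perm (Fin 2)) i ≠ (Equiv.swap 0 1 : Equiv.Perm (Fin 2)) i).card = 2 := by decide
  have h3 : (Finset.univ.filter fun i : Fin 2 =>
      ¬ i = (Equiv.swap 0 1 : Equiv.Perm (Fin 2)) i).card = 2 := by decide
  have h4 : (Finset.univ.filter fun i : Fin 2 =>
      ¬ (Equiv.swap 0 1 : Equiv.Perm (Fin 2)) i = i).card = 2 := by decide
  cases a <;> cases b <;> simp [dh0, c2, h1, h2, h3, h4] <;> norm_num

lemma dh0_nonneg {n : ℕ} (σ τ : Equiv.Perm (Fin n)) : 0 ≤ dh0 σ τ := by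
  unfold dh0; positivity

lemma dH_nonneg {n N : ℕ} (h : n ≤ N) (σ : Equiv.Perm (Fin n)) (τ : Equiv.Perm (Fin N)) :
    0 ≤ dH h σ τ := by
  unfold dH
  rcases Nat.eq_zero_or_pos N with hN | hN
  · simp [hN]
  · have hc : (Finset.univ.filter fun i : Fin n =>
        ((σ i : ℕ) = ((τ (Fin.castLE h i) : Fin N) : ℕ))).card ≤ N := by
      calc _ ≤ (Finset.univ : Finset (Fin n)).card := Finset.card_filter_le _ _
      _ = n := by simp
      _ ≤ N := h
    have hN' : (0:ℝ) < N := by exact_mod_cast hN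
    have : ((Finset.univ.filter fun i : Fin n =>
        ((σ i : ℕ) = ((τ (Fin.castLE h i) : Fin N) : ℕ))).card : ℝ) / N ≤ 1 := by
      rw [div_le_one hN']; exact_mod_cast hc
    linarith

lemma dH_sum_ge_one {N : ℕ} (h : 2 ≤ N) (σ : Equiv.Perm (Fin N)) :
    1 ≤ dH h (1 : Equiv.Perm (Fin 2)) σ + dH h (Equiv.swap 0 1) σ := by
  set f1 := Finset.univ.filter fun i : Fin 2 =>
    (((1 : Equiv.Perm (Fin 2)) i : ℕ) = ((σ (Fin.castLE h i) : Fin N) : ℕ)) with hf1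
  set f2 := Finset.univ.filter fun i : Fin 2 =>
    (((Equiv.swap 0 1 : Equiv.Perm (Fin 2)) i : ℕ) = ((σ (Fin.castLE h i) : Fin N) : ℕ)) with hf2
  have hdisj : Disjoint f1 f2 := by
    rw [Finset.disjoint_left]
    intro i h1 h2
    rw [hf1, Finset.mem_filter] at h1
    rw [hf2, Finset.mem_filter] at h2
    have hv : (((1 : Equiv.Perm (Fin 2)) i : Fin 2) : ℕ)
        = (((Equiv.swap 0 1 : Equiv.Perm (Fin 2)) i : Fin 2) : ℕ) := h1.2.trans h2.2.symm
    have : (1 : Equiv.Perm (Fin 2)) i = (Equiv.swap 0 1 : Equiv.Perm (Fin 2)) i :=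
      Fin.val_injective hv
    revert this
    fin_cases i <;> decide
  have hcard : f1.card + f2.card ≤ 2 := by
    rw [← Finset.card_union_of_disjoint hdisj]
    calc (f1 ∪ f2).card ≤ (Finset.univ : Finset (Fin 2)).card := Finset.card_le_univ _
    _ = 2 := by simp
  have hN0 : (0:ℝ) < N := by
    have : 0 < N := lt_of_lt_of_le two_pos h
    exact_mod_cast this
  have hsum : (f1.card : ℝ)/N + (f2.card : ℝ)/N ≤ 1 := by
    rw [← add_div, div_le_one hN0]
    have h2N : (2:ℝ) ≤ N := by exact_mod_cast h
    have : ((f1.card + f2.card : ℕ) : ℝ) ≤ 2 := by exact_mod_cast hcard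
    push_cast at this
    linarith
  simp only [dH]
  rw [← hf1, ← hf2]
  linarith

end Aux2
section Aux3

variable {V : Type*} [Fintype V] [DecidableEq V]

lemma distSet_nonneg {n : ℕ} (α : V → Equiv.Perm (Fin n)) :
    0 ≤ distToConstants α := by
  apply Real.sInf_nonneg
  rintro d ⟨N, h, σ, rfl⟩
  apply div_nonneg _ (by positivity)
  exact Finset.sum_nonneg fun y _ => dH_nonneg h (α y) σ

lemma localDefect0_nonneg (A : V → V → ℕ) (k : ℕ) {n : ℕ} (α : V → Equiv.Perm (Fin n)) :
    0 ≤ localDefect0 A k α := by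
  apply div_nonneg _ (by positivity)
  exact Finset.sum_nonneg fun x _ => Finset.sum_nonneg fun y _ =>
    mul_nonneg (by positivity) (dh0_nonneg _ _)

lemma symSet_bddBelow (A : V → V → ℕ) (k : ℕ) :
    BddBelow { c : ℝ | ∃ (n : ℕ) (_ : 2 ≤ n) (α : V → Equiv.Perm (Fin n)),
      localDefect0 A k α ≠ 0 ∧ c = localDefect0 A k α / distToConstants α } := by
  refine ⟨0, ?_⟩
  rintro c ⟨n, hn, α, hne, rfl⟩
  exact div_nonneg (localDefect0_nonneg A k α) (distSet_nonneg α)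

lemma dist_ge (α : V → Bool) [Nonempty V]
    (hT : (Finset.univ.filter fun x => α x = true).Nonempty)
    (hF : (Finset.univ.filter fun x => α x = false).Nonempty) :
    ((min (Finset.univ.filter fun x => α x = true).card
        (Finset.univ.filter fun x => α x = false).card : ℕ) : ℝ) / (Fintype.card V : ℝ)
      ≤ distToConstants (fun y => c2 (α y)) := by
  apply le_csInf
  · exact ⟨_, 2, le_refl 2, 1, rfl⟩
  · rintro d ⟨N, h, σ, rfl⟩
    have hV : (0:ℝ) < (Fintype.card V : ℝ) := by exact_mod_cast Fintype.card_pos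
    gcongr
    set T := Finset.univ.filter (fun x => α x = true) with hTdef
    set F := Finset.univ.filter (fun x => α x = false) with hFdef
    have hcompl : Tᶜ = F := compl_filter_true α
    have hsplit : ∑ y, dH h (c2 (α y)) σ
        = T.card • dH h (c2 true) σ + F.card • dH h (c2 false) σ := by
      rw [← Finset.sum_add_sum_compl T (fun y => dH h (c2 (α y)) σ), hcompl]
      congr 1
      · rw [Finset.sum_congr rfl (fun y hy => ?_), Finset.sum_const]
        have hy' : α y = true := by simpa [hTdef] using (Finset.mem_filter.mp hy).2
        rw [hy']
      · rw [Finset.sum_congr rfl (fun y hy => ?_), Finset.sum_const]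
        have hy' : α y = false := by simpa [hFdef] using (Finset.mem_filter.mp hy).2
        rw [hy']
    have ha : 0 ≤ dH h (c2 true) σ := dH_nonneg h _ σ
    have hb : 0 ≤ dH h (c2 false) σ := dH_nonneg h _ σ
    have hone : 1 ≤ dH h (c2 false) σ + dH h (c2 true) σ := by
      have := dH_sum_ge_one h σ
      simpa [c2] using this
    have hmT : ((min T.card F.card : ℕ) : ℝ) ≤ (T.card : ℝ) := by
      exact_mod_cast min_le_left _ _
    have hmF : ((min T.card F.card : ℕ) : ℝ) ≤ (F.card : ℝ) := by
      exact_mod_cast min_le_right _ _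
    have hm0 : (0:ℝ) ≤ ((min T.card F.card : ℕ) : ℝ) := by positivity
    have key := mul_le_mul_of_nonneg_left hone hm0
    have kT := mul_le_mul_of_nonneg_right hmT ha
    have kF := mul_le_mul_of_nonneg_right hmF hb
    rw [hsplit, nsmul_eq_mul, nsmul_eq_mul]
    nlinarith [key, kT, kF]

end Aux3
section Aux4

variable {V : Type*} [Fintype V] [DecidableEq V]

lemma crossing (A : V → V → ℕ) {α : V → Bool} {x y : V}
    (hconn : Relation.ReflTransGen (fun a b => 0 < A a b) x y) :
    α x ≠ α y → ∃ a b, 0 < A a b ∧ α a ≠ α b := by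
  induction hconn with
  | refl => exact fun h => absurd rfl h
  | @tail b c h step ih =>
    intro hxc
    by_cases hbc : α b = α c
    · exact ih (fun e => hxc (e.trans hbc))
    · exact ⟨b, c, step, hbc⟩

lemma bool_filter_nonempty (α : V → Bool) {x y : V} (hxy : α x ≠ α y) :
    (Finset.univ.filter fun z => α z = true).Nonempty ∧
    (Finset.univ.filter fun z => α z = false).Nonempty := by
  constructor
  · cases htx : α x with
    | true => exact ⟨x, by simp [htx]⟩
    | false =>
      cases hty : α y with
      | true => exact ⟨y, by simp [hty]⟩
      | false => rw [htx, hty] at hxy; exact absurd rfl hxy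
  · cases htx : α x with
    | false => exact ⟨x, by simp [htx]⟩
    | true =>
      cases hty : α y with
      | false => exact ⟨y, by simp [hty]⟩
      | true => rw [htx, hty] at hxy; exact absurd rfl hxy

end Aux4
/-- **Remark 5.8.** For a finite connected `k`-regular multigraph `X`, the classical Cheeger
constant satisfies `h(X) = (k/2)·h₀(X, 𝔽₂)`, and `h₀(X, 𝔽₂) ≥ h₀(X, Sym)`. -/
theorem classical_cheeger_eq_and_F2_ge_Sym
    [Nonempty V]
    (A : V → V → ℕ) (k : ℕ) (hk : 1 ≤ k)
    (hsymm : ∀ x y, A x y = A y x)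
    (hreg : ∀ x, ∑ y, A x y = k)
    (hconn : ∀ x y : V, Relation.ReflTransGen (fun a b => 0 < A a b) x y) :
    cheegerClassical A = ((k : ℝ) / 2) * cheeger0F2 A k ∧
      cheeger0Sym A k ≤ cheeger0F2 A k := by
  constructor
  · -- part 1
    have hset : { c : ℝ | ∃ S : Finset V, S.Nonempty ∧ S ≠ Finset.univ ∧
        c = (∑ x ∈ S, ∑ y ∈ Sᶜ, (A x y : ℝ)) / (min S.card Sᶜ.card : ℝ) }
        = ((k:ℝ)/2) • { c : ℝ | ∃ α : V → Bool, (∃ x y, α x ≠ α y) ∧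
            c = ((∑ x, ∑ y, (A x y : ℝ) * (if α x ≠ α y then 1 else 0)) /
                  ((k : ℝ) * (Fintype.card V : ℝ))) /
                ((min (Finset.univ.filter fun x => α x = true).card
                      (Finset.univ.filter fun x => α x = false).card : ℝ) /
                  (Fintype.card V : ℝ)) } := by
      ext c
      simp only [Set.mem_setOf_eq, Set.mem_smul_set, smul_eq_mul]
      constructor
      · rintro ⟨S, hne, huniv, rfl⟩
        set α : V → Bool := fun x => decide (x ∈ S) with hα
        have hfilt : (Finset.univ.filter fun x => α x = true) = S := by
          ext x; simp [hα]
        have hcomplS : (Finset.univ.filter fun x => α x = false) = Sᶜ := by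
          rw [← compl_filter_true, hfilt]
        obtain ⟨y, hy⟩ : ∃ y, y ∉ S := by
          by_contra hcon
          push_neg at hcon
          exact huniv (Finset.eq_univ_iff_forall.mpr hcon)
        obtain ⟨x, hx⟩ := hne
        refine ⟨_, ⟨α, ⟨x, y, by simp [hα, hx, hy]⟩, rfl⟩, ?_⟩
        have hcore := value_core A k hk hsymm α
          (by rw [hfilt]; exact ⟨x, hx⟩)
          (by rw [hcomplS]; exact ⟨y, Finset.mem_compl.mpr hy⟩)
        conv_rhs => rw [← hfilt]
        exact hcore.symm
      · rintro ⟨b, ⟨α, ⟨x, y, hxy⟩, rfl⟩, rfl⟩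
        obtain ⟨hT, hF⟩ := bool_filter_nonempty α hxy
        refine ⟨Finset.univ.filter fun x => α x = true, hT, ?_, ?_⟩
        · intro h
          have := hF
          rw [← compl_filter_true, h, Finset.compl_univ] at this
          exact Finset.not_nonempty_empty this
        · exact (value_core A k hk hsymm α hT hF).symm
    rw [cheegerClassical, cheeger0F2, hset,
      Real.sInf_smul_of_nonneg (by positivity), smul_eq_mul]
  · -- part 2
    by_cases hV2 : ∃ x y : V, x ≠ y
    · obtain ⟨x0, y0, hxy0⟩ := hV2
      rw [cheeger0F2]
      apply le_csInf
      · refine ⟨_, fun z => decide (z = x0), ⟨x0, y0, ?_⟩, rfl⟩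
        simp [hxy0, Ne.symm hxy0]
      · rintro b ⟨α, ⟨x, y, hxy⟩, rfl⟩
        obtain ⟨hT, hF⟩ := bool_filter_nonempty α hxy
        obtain ⟨a, b', hab, hnab⟩ := crossing A (hconn x y) hxy
        set β : V → Equiv.Perm (Fin 2) := fun z => c2 (α z) with hβ
        have hnum : 0 < ∑ x, ∑ y, (A x y : ℝ) * (if α x ≠ α y then 1 else 0) := by
          apply Finset.sum_pos'
          · intro i _
            apply Finset.sum_nonneg
            intro j _
            apply mul_nonneg (by positivity)
            split <;> norm_num
          · refine ⟨a, Finset.mem_univ a, Finset.sum_pos' ?_ ⟨b', Finset.mem_univ b', ?_⟩⟩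
            · intro j _
              apply mul_nonneg (by positivity)
              split <;> norm_num
            · rw [if_pos hnab, mul_one]
              exact_mod_cast hab
        have hβnum : localDefect0 A k β
            = (∑ x, ∑ y, (A x y : ℝ) * (if α x ≠ α y then 1 else 0)) /
              ((k : ℝ) * (Fintype.card V : ℝ)) := by
          rw [localDefect0]
          congr 1
          refine Finset.sum_congr rfl fun i _ => Finset.sum_congr rfl fun j _ => ?_
          rw [hβ, dh0_c2]
        have hV : (0:ℝ) < (Fintype.card V : ℝ) := by exact_mod_cast Fintype.card_pos
        have hkV : (0:ℝ) < (k : ℝ) * (Fintype.card V : ℝ) := by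
          have : (0:ℝ) < (k:ℝ) := by exact_mod_cast hk
          positivity
        have hD : 0 < localDefect0 A k β := by
          rw [hβnum]; exact div_pos hnum hkV
        have hmem : localDefect0 A k β / distToConstants β ∈
            { c : ℝ | ∃ (n : ℕ) (_ : 2 ≤ n) (γ : V → Equiv.Perm (Fin n)),
              localDefect0 A k γ ≠ 0 ∧ c = localDefect0 A k γ / distToConstants γ } :=
          ⟨2, le_refl 2, β, hD.ne', rfl⟩
        refine le_trans (csInf_le (symSet_bddBelow A k) hmem) ?_
        have hm : (0:ℝ) < ((min (Finset.univ.filter fun x => α x = true).card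
            (Finset.univ.filter fun x => α x = false).card : ℕ) : ℝ) :=
          filter_card_min_pos α hT hF
        have hdist := dist_ge α hT hF
        rw [hβnum]
        have hcast : ((min (Finset.univ.filter fun x => α x = true).card
            (Finset.univ.filter fun x => α x = false).card : ℕ) : ℝ)
            = (min (Finset.univ.filter fun x => α x = true).card
                (Finset.univ.filter fun x => α x = false).card : ℝ) := by
          push_cast; ring
        rw [hcast] at hm hdist
        rw [← hβnum]
        calc localDefect0 A k β / distToConstants β
            ≤ localDefect0 A k β /
              ((min (Finset.univ.filter fun x => α x = true).card
                  (Finset.univ.filter fun x => α x = false).card : ℝ) /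
                (Fintype.card V : ℝ)) := by
              apply div_le_div_of_nonneg_left hD.le (div_pos hm hV) (hβ ▸ hdist)
          _ = _ := by rw [hβnum]
    · push_neg at hV2
      have h1 : { c : ℝ | ∃ α : V → Bool, (∃ x y, α x ≠ α y) ∧
          c = ((∑ x, ∑ y, (A x y : ℝ) * (if α x ≠ α y then 1 else 0)) /
                ((k : ℝ) * (Fintype.card V : ℝ))) /
              ((min (Finset.univ.filter fun x => α x = true).card
                    (Finset.univ.filter fun x => α x = false).card : ℝ) /
                (Fintype.card V : ℝ)) } = (∅ : Set ℝ) := by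
        apply Set.eq_empty_iff_forall_notMem.mpr
        rintro c ⟨α, ⟨x, y, hxy⟩, -⟩
        exact hxy (congrArg α (hV2 x y))
      have h2 : { c : ℝ | ∃ (n : ℕ) (_ : 2 ≤ n) (γ : V → Equiv.Perm (Fin n)),
          localDefect0 A k γ ≠ 0 ∧ c = localDefect0 A k γ / distToConstants γ }
          = (∅ : Set ℝ) := by
        apply Set.eq_empty_iff_forall_notMem.mpr
        rintro c ⟨n, hn, γ, hne, -⟩
        apply hne
        rw [localDefect0]
        have : ∑ x, ∑ y, (A x y : ℝ) * dh0 (γ x) (γ y) = 0 := by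
          apply Finset.sum_eq_zero
          intro i _
          apply Finset.sum_eq_zero
          intro j _
          have : i = j := hV2 i j
          rw [this, dh0_self, mul_zero]
        rw [this, zero_div]
      rw [cheeger0Sym, cheeger0F2, h1, h2, Real.sInf_empty]

end
end
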